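/- arXiv:1309.0435 — 3 statements merged into one kernel-verified Lean document; each statement's English description precedes it below -/
import Mathlib

section
/- Let G be a Berge graph and let a, b be two non-adjacent vertices of G. Then {a, b} is an even pair in G if and only if the graph obtained from G by adding one new vertex adjacent exactly to a and b is Berge. -/
open SimpleGraph

/-- A walk is a *chordless (induced) path*: it is a path and the only edges of `G`
between its vertices are the edges of the walk. -/
def IsInducedPathW {V : Type*} (G : SimpleGraph V) {u v : V} (p : G.Walk u v) : Prop :=
  p.IsPath ∧ ∀ x y : V, x ∈ p.support → y ∈ p.support → G.Adj x y → p.toSubgraph.Adj x y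

/-- A closed walk is a *hole*: an induced (chordless) cycle with at least 4 vertices. -/
def IsHoleW {V : Type*} (G : SimpleGraph V) {v : V} (c : G.Walk v v) : Prop :=
  c.IsCycle ∧ 4 ≤ c.length ∧
    ∀ x y : V, x ∈ c.support → y ∈ c.support → G.Adj x y → c.toSubgraph.Adj x y

/-- `G` contains an odd hole. -/
def HasOddHole {V : Type*} (G : SimpleGraph V) : Prop :=
  ∃ (v : V) (c : G.Walk v v), IsHoleW G c ∧ Odd c.length

/-- Compatibility condition for two legs of a pyramid with apex `a`:
they meet only at `a`, and `bᵢbⱼ` is the only edge between them away from `a`. -/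
def PyrPair {V : Type*} (G : SimpleGraph V) (a bi bj : V)
    (Pi : G.Walk a bi) (Pj : G.Walk a bj) : Prop :=
  (∀ x : V, x ∈ Pi.support → x ∈ Pj.support → x = a) ∧
  (∀ x ∈ Pi.support, ∀ y ∈ Pj.support, x ≠ a → y ≠ a → G.Adj x y → x = bi ∧ y = bj)

/-- The three paths `P₁, P₂, P₃` form a *pyramid* of `G` with triangle `{b₁,b₂,b₃}`
and apex `a`. -/
def IsPyramid {V : Type*} (G : SimpleGraph V) (a b₁ b₂ b₃ : V)
    (P₁ : G.Walk a b₁) (P₂ : G.Walk a b₂) (P₃ : G.Walk a b₃) : Prop :=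
  IsInducedPathW G P₁ ∧ IsInducedPathW G P₂ ∧ IsInducedPathW G P₃ ∧
  G.Adj b₁ b₂ ∧ G.Adj b₂ b₃ ∧ G.Adj b₁ b₃ ∧
  ¬(G.Adj a b₁ ∧ G.Adj a b₂) ∧ ¬(G.Adj a b₁ ∧ G.Adj a b₃) ∧ ¬(G.Adj a b₂ ∧ G.Adj a b₃) ∧
  PyrPair G a b₁ b₂ P₁ P₂ ∧ PyrPair G a b₁ b₃ P₁ P₃ ∧ PyrPair G a b₂ b₃ P₂ P₃

/-- Compatibility condition for two paths of a prism: they are vertex-disjoint and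
the only edges between them are the two triangle edges `aᵢaⱼ` and `bᵢbⱼ`. -/
def PriPair {V : Type*} (G : SimpleGraph V) (ai bi aj bj : V)
    (Pi : G.Walk ai bi) (Pj : G.Walk aj bj) : Prop :=
  (∀ x : V, x ∈ Pi.support → x ∉ Pj.support) ∧
  (∀ x ∈ Pi.support, ∀ y ∈ Pj.support, G.Adj x y → (x = ai ∧ y = aj) ∨ (x = bi ∧ y = bj))

/-- The three paths `P₁, P₂, P₃` form a *prism* of `G` with triangles `{a₁,a₂,a₃}`
and `{b₁,b₂,b₃}`. -/
def IsPrism {V : Type*} (G : SimpleGraph V) (a₁ a₂ a₃ b₁ b₂ b₃ : V)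
    (P₁ : G.Walk a₁ b₁) (P₂ : G.Walk a₂ b₂) (P₃ : G.Walk a₃ b₃) : Prop :=
  IsInducedPathW G P₁ ∧ IsInducedPathW G P₂ ∧ IsInducedPathW G P₃ ∧
  G.Adj a₁ a₂ ∧ G.Adj a₂ a₃ ∧ G.Adj a₁ a₃ ∧
  G.Adj b₁ b₂ ∧ G.Adj b₂ b₃ ∧ G.Adj b₁ b₃ ∧
  a₁ ≠ b₁ ∧ a₂ ≠ b₂ ∧ a₃ ≠ b₃ ∧
  PriPair G a₁ b₁ a₂ b₂ P₁ P₂ ∧ PriPair G a₁ b₁ a₃ b₃ P₁ P₃ ∧ PriPair G a₂ b₂ a₃ b₃ P₂ P₃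

/-- `G` contains an induced pyramid. -/
def HasPyramid {V : Type*} (G : SimpleGraph V) : Prop :=
  ∃ (a b₁ b₂ b₃ : V) (P₁ : G.Walk a b₁) (P₂ : G.Walk a b₂) (P₃ : G.Walk a b₃),
    IsPyramid G a b₁ b₂ b₃ P₁ P₂ P₃

/-- `G` contains an induced prism. -/
def HasPrism {V : Type*} (G : SimpleGraph V) : Prop :=
  ∃ (a₁ a₂ a₃ b₁ b₂ b₃ : V) (P₁ : G.Walk a₁ b₁) (P₂ : G.Walk a₂ b₂) (P₃ : G.Walk a₃ b₃),
    IsPrism G a₁ a₂ a₃ b₁ b₂ b₃ P₁ P₂ P₃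

/-- `G` has an induced pyramid whose vertex set is exactly `S`. -/
def HasPyramidOn {V : Type*} [DecidableEq V] (G : SimpleGraph V) (S : Finset V) : Prop :=
  ∃ (a b₁ b₂ b₃ : V) (P₁ : G.Walk a b₁) (P₂ : G.Walk a b₂) (P₃ : G.Walk a b₃),
    IsPyramid G a b₁ b₂ b₃ P₁ P₂ P₃ ∧
    P₁.support.toFinset ∪ P₂.support.toFinset ∪ P₃.support.toFinset = S

/-- `G` has an induced prism whose vertex set is exactly `S`. -/
def HasPrismOn {V : Type*} [DecidableEq V] (G : SimpleGraph V) (S : Finset V) : Prop :=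
  ∃ (a₁ a₂ a₃ b₁ b₂ b₃ : V) (P₁ : G.Walk a₁ b₁) (P₂ : G.Walk a₂ b₂) (P₃ : G.Walk a₃ b₃),
    IsPrism G a₁ a₂ a₃ b₁ b₂ b₃ P₁ P₂ P₃ ∧
    P₁.support.toFinset ∪ P₂.support.toFinset ∪ P₃.support.toFinset = S

/-- `G` is a *Berge graph*: it has no odd hole and no odd antihole (equivalently, its
complement has no odd hole). -/
def IsBerge {V : Type*} (G : SimpleGraph V) : Prop :=
  ¬ HasOddHole G ∧ ¬ HasOddHole Gᶜ

/-- The graph obtained from `G` by adding one new vertex adjacent exactly to `a` and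
`b`. -/
def addDegTwoVertex {V : Type*} (G : SimpleGraph V) (a b : V) : SimpleGraph (Option V) :=
  SimpleGraph.fromRel (fun x y =>
    match x, y with
    | some u, some v => G.Adj u v
    | none, some v => v = a ∨ v = b
    | _, _ => False)


section EPBAux

variable {V : Type*} {W : Type*}

lemma toSubgraph_adj_iff_edges {G : SimpleGraph V} {u v : V} (p : G.Walk u v) (x y : V) :
    p.toSubgraph.Adj x y ↔ s(x, y) ∈ p.edges := by
  rw [← SimpleGraph.Subgraph.mem_edgeSet, Walk.mem_edges_toSubgraph]

/-- Pull back a walk along an injective graph map whose image is induced. -/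
lemma pullWalk {f : V → W} (hf : Function.Injective f) {G : SimpleGraph V} {H : SimpleGraph W}
    (hadj : ∀ u v, H.Adj (f u) (f v) ↔ G.Adj u v) :
    ∀ {x y : W} (p : H.Walk x y), (∀ w ∈ p.support, ∃ u, w = f u) →
    ∀ {u v : V}, x = f u → y = f v →
    ∃ q : G.Walk u v, q.support.map f = p.support ∧
      q.edges.map (Sym2.map f) = p.edges := by
  intro x y p
  induction p with
  | nil =>
    intro hs u v hx hy
    obtain rfl : u = v := hf (hx.symm.trans hy)
    subst hx
    exact ⟨Walk.nil, by simp, by simp⟩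
  | @cons x m y h p ih =>
    intro hs u v hx hy
    obtain ⟨u', rfl⟩ := hs m (by simp)
    subst hx
    have hadj' : G.Adj u u' := (hadj u u').mp h
    obtain ⟨q, hq1, hq2⟩ := ih (fun w hw => hs w (by simp [hw])) rfl hy
    exact ⟨Walk.cons hadj' q, by simp [hq1], by simp [hq2]⟩

/-- Decompose a cycle based at `v₀` into its two end edges and middle path. -/
lemma cycle_decomp {G : SimpleGraph V} {v₀ : V} (c : G.Walk v₀ v₀) (hc : c.IsCycle) :
    ∃ (w w' : V) (h₁ : G.Adj v₀ w) (r : G.Walk w w') (h₂ : G.Adj w' v₀),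
      c = Walk.cons h₁ (r.concat h₂) := by
  cases c with
  | nil => exact absurd rfl hc.ne_nil
  | cons h q =>
    rename_i w
    have hq : ¬ q.Nil := by
      intro hn
      have := hn.eq
      subst this
      exact G.irrefl h
    have hq' : ¬ q.reverse.Nil := by
      rw [Walk.not_nil_iff_lt_length] at hq ⊢
      simpa using hq
    obtain ⟨w', h₂, r', hr⟩ := Walk.not_nil_iff.mp hq'
    refine ⟨w, w', h, r'.reverse, h₂.symm, ?_⟩
    have : q = r'.reverse.concat h₂.symm := by
      have := congrArg Walk.reverse hr
      simpa [Walk.reverse_cons, Walk.concat_eq_append] using this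
    rw [this]

end EPBAux


section EPBMain

variable {V : Type*}

lemma adjA {G : SimpleGraph V} {a b u v : V} :
    (addDegTwoVertex G a b).Adj (some u) (some v) ↔ G.Adj u v := by
  simp only [addDegTwoVertex, fromRel_adj]
  constructor
  · rintro ⟨h, h1 | h1⟩
    · exact h1
    · exact h1.symm
  · intro h
    exact ⟨by simpa using h.ne, Or.inl h⟩

lemma adjB {G : SimpleGraph V} {a b v : V} :
    (addDegTwoVertex G a b).Adj none (some v) ↔ v = a ∨ v = b := by
  simp [addDegTwoVertex, fromRel_adj]

lemma adjC {G : SimpleGraph V} {a b : V} : ¬ (addDegTwoVertex G a b).Adj none none :=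
  fun h => h.ne rfl

lemma cadjA {G : SimpleGraph V} {a b u v : V} :
    ((addDegTwoVertex G a b)ᶜ).Adj (some u) (some v) ↔ Gᶜ.Adj u v := by
  simp [compl_adj, adjA]

lemma cadjB {G : SimpleGraph V} {a b v : V} :
    ((addDegTwoVertex G a b)ᶜ).Adj none (some v) ↔ ¬(v = a ∨ v = b) := by
  simp [compl_adj, adjB]

lemma backward_aux {G : SimpleGraph V} {a b : V} (hab : a ≠ b) (hnadj : ¬ G.Adj a b)
    (p : G.Walk a b) (hp : IsInducedPathW G p) (hodd : Odd p.length) :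
    HasOddHole (addDegTwoVertex G a b) := by
  set G' := addDegTwoVertex G a b with hG'
  let hom : G →g G' := ⟨some, fun h => adjA.mpr h⟩
  have hna : G'.Adj none (some a) := adjB.mpr (Or.inl rfl)
  have hbn : G'.Adj (some b) none := (adjB.mpr (Or.inr rfl)).symm
  set p' : G'.Walk (some a) (some b) := p.map hom with hp'
  set c : G'.Walk none none := Walk.cons hna (p'.concat hbn) with hc
  have hsupp' : p'.support = p.support.map some := by
    simp only [hp', Walk.support_map]
    exact List.map_congr_left (fun x _ => rfl)
  have hedges' : p'.edges = p.edges.map (Sym2.map some) := by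
    simp only [hp', Walk.edges_map]
    refine List.map_congr_left (fun e _ => ?_)
    exact congrFun (congrArg Sym2.map rfl) e
  have hcs : c.support = none :: (p.support.map some ++ [none]) := by
    simp [hc, Walk.support_concat, hsupp']
  have hce : c.edges = s(none, some a) :: (p.edges.map (Sym2.map some) ++ [s(some b, none)]) := by
    simp [hc, Walk.edges_concat, hedges']
  have hclen : c.length = p.length + 2 := by
    simp [hc, Walk.length_concat, hp']
  have hplen : 3 ≤ p.length := by
    have h1 : p.length ≠ 1 := fun h => hnadj (Walk.adj_of_length_eq_one h)
    obtain ⟨k, hk⟩ := hodd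
    omega
  have hnone_not : (none : Option V) ∉ p.support.map some := by
    simp
  have hmap_nodup : (p.support.map some).Nodup :=
    (hp.1.support_nodup).map (Option.some_injective V)
  have hem : ∀ e ∈ p.edges.map (Sym2.map some), (none : Option V) ∉ e := by
    intro e he hne
    obtain ⟨e', he', rfl⟩ := List.mem_map.mp he
    obtain ⟨y, _, hy⟩ := (Sym2.mem_map).mp hne
    exact Option.some_ne_none y hy
  have hcyc : c.IsCycle := by
    rw [Walk.isCycle_def]
    refine ⟨?_, ?_, ?_⟩
    · rw [Walk.isTrail_def, hce]
      refine List.Nodup.cons ?_ ?_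
      · intro hmem
        rcases List.mem_append.mp hmem with h | h
        · exact hem _ h (by simp)
        · simp only [List.mem_singleton] at h
          rw [Sym2.eq_iff] at h
          rcases h with ⟨h1, h2⟩ | ⟨h1, h2⟩
          · exact Option.some_ne_none b h1.symm
          · exact hab (Option.some_injective V h2)
      · refine List.Nodup.append ?_ (List.nodup_singleton _) ?_
        · exact (hp.1.isTrail.edges_nodup).map (Sym2.map.injective (Option.some_injective V))
        · intro e he h2
          simp only [List.mem_singleton] at h2
          subst h2
          exact hem _ he (by simp)
    · simp [hc]
    · rw [hcs]
      simp only [List.tail_cons]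
      refine List.Nodup.append hmap_nodup (List.nodup_singleton _) ?_
      intro x hx h2
      simp only [List.mem_singleton] at h2
      subst h2
      exact hnone_not hx
  refine ⟨none, c, ⟨hcyc, by omega, ?_⟩,
    by obtain ⟨k, hk⟩ := hodd; exact ⟨k + 1, by omega⟩⟩
  intro x y hx hy hxy
  rw [toSubgraph_adj_iff_edges, hce]
  rw [hcs] at hx hy
  match x, y with
  | none, none => exact absurd hxy adjC
  | none, some v =>
    rcases adjB.mp hxy with rfl | rfl
    · exact List.mem_cons_self
    · have : s(none, some v) = s(some v, none) := Sym2.eq_swap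
      rw [this]
      simp
  | some u, none =>
    rcases adjB.mp hxy.symm with rfl | rfl
    · have : s(some u, none) = s(none, some u) := Sym2.eq_swap
      rw [this]
      exact List.mem_cons_self
    · simp
  | some u, some v =>
    have hu : u ∈ p.support := by
      simp only [List.mem_cons, List.mem_append, List.mem_map, List.mem_singleton] at hx
      rcases hx with h | h | h
      · exact absurd h (by simp)
      · obtain ⟨u', hu', he⟩ := h
        exact (Option.some_injective V he) ▸ hu'
      · exact absurd h (by simp)
    have hv : v ∈ p.support := by
      simp only [List.mem_cons, List.mem_append, List.mem_map, List.mem_singleton] at hy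
      rcases hy with h | h | h
      · exact absurd h (by simp)
      · obtain ⟨u', hu', he⟩ := h
        exact (Option.some_injective V he) ▸ hu'
      · exact absurd h (by simp)
    have := hp.2 u v hu hv (adjA.mp hxy)
    rw [toSubgraph_adj_iff_edges] at this
    refine List.mem_cons_of_mem _ (List.mem_append_left _ ?_)
    exact List.mem_map.mpr ⟨_, this, rfl⟩

end EPBMain


section EPBTransfer

variable {V : Type*} {W : Type*}

lemma mem_support_iff_mem_tail {H : SimpleGraph W} {v : W} {c : H.Walk v v}
    (hnil : ¬ c.Nil) (x : W) : x ∈ c.support ↔ x ∈ c.support.tail := by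
  cases c with
  | nil => exact absurd Walk.Nil.nil hnil
  | cons h q =>
    simp only [Walk.support_cons, List.tail_cons, List.mem_cons]
    constructor
    · rintro (rfl | hx)
      · exact q.end_mem_support
      · exact hx
    · exact fun hx => Or.inr hx

lemma hole_rotate [DecidableEq W] {H : SimpleGraph W} {v₀ u : W} {c : H.Walk v₀ v₀} (hc : IsHoleW H c)
    (hu : u ∈ c.support) :
    IsHoleW H (c.rotate u hu) ∧ (c.rotate u hu).length = c.length := by
  obtain ⟨hcyc, hlen, hind⟩ := hc
  have hrot := Walk.rotate_edges c u hu
  have hlenr : (c.rotate u hu).length = c.length := by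
    rw [← Walk.length_edges, ← Walk.length_edges]
    exact hrot.perm.length_eq
  have hnil : ¬ c.Nil := by
    rw [Walk.not_nil_iff_lt_length]; omega
  have hnil' : ¬ (c.rotate u hu).Nil := by
    rw [Walk.not_nil_iff_lt_length]; omega
  have hsupp : ∀ x, x ∈ (c.rotate u hu).support ↔ x ∈ c.support := by
    intro x
    rw [mem_support_iff_mem_tail hnil' x, mem_support_iff_mem_tail hnil x,
      (Walk.support_rotate c u hu).mem_iff]
  refine ⟨⟨hcyc.rotate hu, by omega, ?_⟩, hlenr⟩
  intro x y hx hy hxy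
  rw [toSubgraph_adj_iff_edges, hrot.mem_iff]
  rw [← toSubgraph_adj_iff_edges]
  exact hind x y ((hsupp x).mp hx) ((hsupp y).mp hy) hxy

lemma hole_avoid {H : SimpleGraph (Option V)} {Gb : SimpleGraph V}
    (hadj : ∀ u v, H.Adj (some u) (some v) ↔ Gb.Adj u v)
    (hnoodd : ¬ HasOddHole Gb) {v₀ : Option V} (c : H.Walk v₀ v₀)
    (hc : IsHoleW H c) (hodd : Odd c.length) (hns : (none : Option V) ∉ c.support) : False := by
  obtain ⟨hcyc, hlen, hind⟩ := hc
  have hsome : ∀ w ∈ c.support, ∃ u, w = some u := by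
    intro w hw
    cases w with
    | none => exact absurd hw hns
    | some u => exact ⟨u, rfl⟩
  obtain ⟨u, hu⟩ := hsome v₀ c.start_mem_support
  subst hu
  obtain ⟨q, hq1, hq2⟩ := pullWalk (Option.some_injective V) hadj c hsome rfl rfl
  have hql : q.length = c.length := by
    rw [← Walk.length_edges, ← Walk.length_edges, ← hq2, List.length_map]
  refine hnoodd ⟨u, q, ⟨?_, by omega, ?_⟩, by rwa [hql]⟩
  · rw [Walk.isCycle_def]
    refine ⟨?_, ?_, ?_⟩
    · rw [Walk.isTrail_def]
      exact List.Nodup.of_map _ (hq2 ▸ hcyc.isTrail.edges_nodup)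
    · intro h
      subst h
      simp at hql
      omega
    · have : (q.support.map some).tail.Nodup := by
        rw [hq1]
        exact hcyc.support_nodup
      rw [← List.map_tail] at this
      exact List.Nodup.of_map _ this
  · intro x y hx hy hxy
    have hx' : (some x) ∈ c.support := by rw [← hq1]; exact List.mem_map_of_mem hx
    have hy' : (some y) ∈ c.support := by rw [← hq1]; exact List.mem_map_of_mem hy
    have := hind _ _ hx' hy' ((hadj x y).mpr hxy)
    rw [toSubgraph_adj_iff_edges] at this ⊢
    rw [← hq2] at this
    have heq : s(some x, some y) = Sym2.map some s(x, y) := by simp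
    rw [heq] at this
    exact (List.mem_map_of_injective (Sym2.map.injective (Option.some_injective V))).mp this

end EPBTransfer


section EPBHole

variable {V : Type*}

lemma reverse_induced {G : SimpleGraph V} {u v : V} {q : G.Walk u v}
    (h : IsInducedPathW G q) : IsInducedPathW G q.reverse := by
  refine ⟨h.1.reverse, ?_⟩
  intro x y hx hy hxy
  rw [Walk.support_reverse, List.mem_reverse] at hx hy
  rw [Walk.toSubgraph_reverse]
  exact h.2 x y hx hy hxy

lemma hole_through_none {G : SimpleGraph V} {a b : V} (hab : a ≠ b)
    {c : (addDegTwoVertex G a b).Walk none none}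
    (hc : IsHoleW (addDegTwoVertex G a b) c) (hodd : Odd c.length) :
    ∃ p : G.Walk a b, IsInducedPathW G p ∧ Odd p.length := by
  obtain ⟨hcyc, hlen4, hind⟩ := hc
  obtain ⟨w, w', h₁, r, h₂, rfl⟩ := cycle_decomp c hcyc
  have hcs : (Walk.cons h₁ (r.concat h₂)).support = none :: (r.support ++ [none]) := by
    simp [Walk.support_concat]
  have hce : (Walk.cons h₁ (r.concat h₂)).edges
      = s(none, w) :: (r.edges ++ [s(w', none)]) := by
    simp [Walk.edges_concat]
  have hcl : (Walk.cons h₁ (r.concat h₂)).length = r.length + 2 := by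
    simp [Walk.length_concat]
  rw [Walk.isCycle_def] at hcyc
  obtain ⟨htrail, -, htail⟩ := hcyc
  have htail' : (r.support ++ [none]).Nodup := by
    have := htail
    rw [hcs] at this
    simpa using this
  rw [List.nodup_append] at htail'
  obtain ⟨hrnodup, -, hdisj⟩ := htail'
  have hnone_r : (none : Option V) ∉ r.support := fun h => hdisj _ h none (by simp) rfl
  have hne : w ≠ w' := by
    intro h
    subst h
    rw [Walk.isTrail_def, hce] at htrail
    have := (List.nodup_cons.mp htrail).1
    exact this (List.mem_append_right _ (by rw [Sym2.eq_swap]; simp))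
  -- w and w' are some a / some b in some order
  cases w with
  | none => exact absurd h₁ adjC
  | some wa =>
  cases w' with
  | none => exact absurd h₂.symm adjC
  | some wb =>
  have hwa : wa = a ∨ wa = b := adjB.mp h₁
  have hwb : wb = a ∨ wb = b := adjB.mp h₂.symm
  have hwab : wa ≠ wb := fun h => hne (by rw [h])
  have hsome : ∀ x ∈ r.support, ∃ u, x = some u := by
    intro x hx
    cases x with
    | none => exact absurd hx hnone_r
    | some u => exact ⟨u, rfl⟩
  obtain ⟨q, hq1, hq2⟩ := pullWalk (Option.some_injective V)
    (fun u v => adjA) r hsome rfl rfl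
  have hql : q.length = r.length := by
    rw [← Walk.length_edges, ← Walk.length_edges, ← hq2, List.length_map]
  have hqodd : Odd q.length := by
    rw [Nat.odd_iff] at hodd ⊢
    rw [hcl] at hodd
    omega
  have hqind : IsInducedPathW G q := by
    refine ⟨Walk.IsPath.mk' (List.Nodup.of_map _ (hq1 ▸ hrnodup)), ?_⟩
    intro x y hx hy hxy
    have hx' : (some x) ∈ r.support := by rw [← hq1]; exact List.mem_map_of_mem hx
    have hy' : (some y) ∈ r.support := by rw [← hq1]; exact List.mem_map_of_mem hy
    have hmem := hind (some x) (some y)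
      (by rw [hcs]; simp [hx']) (by rw [hcs]; simp [hy']) (adjA.mpr hxy)
    rw [toSubgraph_adj_iff_edges] at hmem ⊢
    rw [hce] at hmem
    rcases List.mem_cons.mp hmem with h | h
    · rw [Sym2.eq_iff] at h
      rcases h with ⟨h1, -⟩ | ⟨-, h2⟩
      · exact absurd h1 (by simp)
      · exact absurd h2 (by simp)
    rcases List.mem_append.mp h with h | h
    · rw [← hq2] at h
      have heq : s(some x, some y) = Sym2.map some s(x, y) := by simp
      rw [heq] at h
      exact (List.mem_map_of_injective (Sym2.map.injective (Option.some_injective V))).mp h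
    · simp only [List.mem_singleton] at h
      rw [Sym2.eq_iff] at h
      rcases h with ⟨-, h2⟩ | ⟨h1, -⟩
      · exact absurd h2 (by simp)
      · exact absurd h1 (by simp)
  rcases hwa with rfl | rfl <;> rcases hwb with rfl | rfl
  · exact absurd rfl hwab
  · exact ⟨q, hqind, hqodd⟩
  · exact ⟨q.reverse, reverse_induced hqind, by rwa [Walk.length_reverse]⟩
  · exact absurd rfl hwab

end EPBHole


section EPBAnti

variable {V : Type*}

set_option maxHeartbeats 1000000 in
lemma antihole_through_none [DecidableEq V] {G : SimpleGraph V} {a b : V} (hab : a ≠ b)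
    {c : ((addDegTwoVertex G a b)ᶜ).Walk none none}
    (hc : IsHoleW ((addDegTwoVertex G a b)ᶜ) c) (hodd : Odd c.length) :
    ∃ p : G.Walk a b, IsInducedPathW G p ∧ Odd p.length := by
  obtain ⟨hcyc, hlen4, hind⟩ := hc
  obtain ⟨w, w', h₁, r, h₂, rfl⟩ := cycle_decomp c hcyc
  have hcs : (Walk.cons h₁ (r.concat h₂)).support = none :: (r.support ++ [none]) := by
    simp [Walk.support_concat]
  have hce : (Walk.cons h₁ (r.concat h₂)).edges
      = s(none, w) :: (r.edges ++ [s(w', none)]) := by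
    simp [Walk.edges_concat]
  have hcl : (Walk.cons h₁ (r.concat h₂)).length = r.length + 2 := by
    simp [Walk.length_concat]
  rw [Walk.isCycle_def] at hcyc
  obtain ⟨htrail, -, htail⟩ := hcyc
  have htail' : (r.support ++ [none]).Nodup := by
    have := htail; rw [hcs] at this; simpa using this
  rw [List.nodup_append] at htail'
  obtain ⟨hrnodup, -, hdisj⟩ := htail'
  have hnone_r : (none : Option V) ∉ r.support := fun h => hdisj _ h none (by simp) rfl
  have hGadj : ∀ u v : Option V, u ≠ v → ¬ ((addDegTwoVertex G a b)ᶜ).Adj u v →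
      (addDegTwoVertex G a b).Adj u v := by
    intro u v hne h
    by_contra h'
    exact h ((compl_adj _ u v).mpr ⟨hne, h'⟩)
  -- interior vertices are `some a` or `some b`
  have hint : ∀ x ∈ r.support, x ≠ w → x ≠ w' → (x = some a ∨ x = some b) := by
    intro x hx hxw hxw'
    cases x with
    | none => exact absurd hx hnone_r
    | some u =>
      by_contra hcon
      push_neg at hcon
      have hu : ¬(u = a ∨ u = b) := by
        rintro (rfl | rfl)
        · exact hcon.1 rfl
        · exact hcon.2 rfl
      have hadj : ((addDegTwoVertex G a b)ᶜ).Adj none (some u) := cadjB.mpr hu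
      have hmem := hind none (some u) (by rw [hcs]; simp) (by rw [hcs]; simp [hx]) hadj
      rw [toSubgraph_adj_iff_edges, hce] at hmem
      rcases List.mem_cons.mp hmem with h | h
      · rw [Sym2.eq_iff] at h
        rcases h with ⟨-, h2⟩ | ⟨-, h2⟩
        · exact hxw h2
        · exact Option.some_ne_none u h2
      rcases List.mem_append.mp h with h | h
      · exact hnone_r (Walk.fst_mem_support_of_mem_edges r h)
      · simp only [List.mem_singleton] at h
        rw [Sym2.eq_iff] at h
        rcases h with ⟨h1, h2⟩ | ⟨h1, h2⟩
        · exact Option.some_ne_none u h2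
        · exact hxw' h2
  -- cardinality bound : r has length 3
  have hsub : r.support.toFinset ⊆ {w, w', some a, some b} := by
    intro x hx
    rw [List.mem_toFinset] at hx
    by_cases h1 : x = w
    · simp [h1]
    by_cases h2 : x = w'
    · simp [h2]
    rcases hint x hx h1 h2 with rfl | rfl <;> simp
  have hlen3 : r.length = 3 := by
    have e1 : r.support.toFinset.card = r.length + 1 := by
      rw [List.toFinset_card_of_nodup hrnodup, Walk.length_support]
    have e2 := Finset.card_le_card hsub
    have e3 := Finset.card_insert_le w ({w', some a, some b} : Finset (Option V))
    have e4 := Finset.card_insert_le w' ({some a, some b} : Finset (Option V))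
    have e5 := Finset.card_insert_le (some a) ({some b} : Finset (Option V))
    have e6 : ({some b} : Finset (Option V)).card = 1 := Finset.card_singleton _
    rw [Nat.odd_iff] at hodd
    rw [hcl] at hodd hlen4
    omega
  clear hsub hdisj htail htrail hcl hce hcs hodd hlen4
  -- destructure r
  cases r with
  | nil => simp at hlen3
  | cons hA1 r1 =>
  rename_i x
  cases r1 with
  | nil => simp at hlen3
  | cons hA2 r2 =>
  rename_i y
  cases r2 with
  | nil => simp at hlen3
  | cons hA3 r3 =>
  rename_i z
  cases r3 with
  | cons hA4 r4 => simp [Walk.length_cons] at hlen3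
  | nil =>
  -- now r = w :: x :: y :: w' with hA1 : H.Adj w x, hA2 : H.Adj x y, hA3 : H.Adj y w'
  simp only [Walk.support_cons, Walk.support_nil, List.nodup_cons, List.mem_cons,
    List.mem_singleton, List.not_mem_nil] at hrnodup
  simp only [Walk.support_cons, Walk.support_nil, List.mem_cons, List.mem_singleton,
    List.not_mem_nil] at hnone_r
  push_neg at hnone_r hrnodup
  obtain ⟨⟨hwx, hwy, hww', -⟩, ⟨hxy, hxw', -⟩, ⟨hyw', -⟩, -⟩ := hrnodup
  obtain ⟨hnw, hnx, hny, hnw', -⟩ := hnone_r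
  -- w, w' are `some`
  cases w with
  | none => exact absurd rfl hnw
  | some wa =>
  cases w' with
  | none => exact absurd rfl hnw'
  | some wb =>
  -- x and y are some a / some b in some order
  have hx : x = some a ∨ x = some b := by
    refine hint x (by simp) (fun h => hwx h.symm) hxw'
  have hy : y = some a ∨ y = some b := by
    refine hint y (by simp) (fun h => hwy h.symm) hyw'
  -- non-adjacencies in the complement give adjacencies in G'
  have hedges : (Walk.cons h₁ ((Walk.cons hA1 (Walk.cons hA2 (Walk.cons hA3
      Walk.nil))).concat h₂)).edges
      = [s(none, some wa), s(some wa, x), s(x, y), s(y, some wb), s(some wb, none)] := by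
    simp [Walk.edges_concat]
  have hsupp : (Walk.cons h₁ ((Walk.cons hA1 (Walk.cons hA2 (Walk.cons hA3
      Walk.nil))).concat h₂)).support
      = [none, some wa, x, y, some wb, none] := by
    simp [Walk.support_concat]
  have noadj : ∀ u v : Option V, u ∈ [none, some wa, x, y, some wb] →
      v ∈ [none, some wa, x, y, some wb] →
      s(u, v) ∉ [s(none, some wa), s(some wa, x), s(x, y), s(y, some wb), s(some wb, none)] →
      ¬ ((addDegTwoVertex G a b)ᶜ).Adj u v := by
    intro u v hu hv hne hadj
    simp only [List.mem_cons, List.not_mem_nil, or_false] at hu hv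
    have hmem := hind u v
      (by rw [hsupp]; rcases hu with rfl|rfl|rfl|rfl|rfl <;> simp)
      (by rw [hsupp]; rcases hv with rfl|rfl|rfl|rfl|rfl <;> simp) hadj
    rw [toSubgraph_adj_iff_edges, hedges] at hmem
    exact hne hmem
  have hnm : ∀ u v : Option V,
      s(u, v) ∈ [s(none, some wa), s(some wa, x), s(x, y), s(y, some wb), s(some wb, none)] →
      (u = none ∧ v = some wa) ∨ (u = some wa ∧ v = none) ∨
      (u = some wa ∧ v = x) ∨ (u = x ∧ v = some wa) ∨
      (u = x ∧ v = y) ∨ (u = y ∧ v = x) ∨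
      (u = y ∧ v = some wb) ∨ (u = some wb ∧ v = y) ∨
      (u = some wb ∧ v = none) ∨ (u = none ∧ v = some wb) := by
    intro u v hmem
    simp only [List.mem_cons, List.not_mem_nil, or_false] at hmem
    rcases hmem with h|h|h|h|h <;> rw [Sym2.eq_iff] at h <;>
      rcases h with ⟨h1, h2⟩|⟨h1, h2⟩
    · exact Or.inl ⟨h1, h2⟩
    · exact Or.inr (Or.inl ⟨h1, h2⟩)
    · exact Or.inr (Or.inr (Or.inl ⟨h1, h2⟩))
    · exact Or.inr (Or.inr (Or.inr (Or.inl ⟨h1, h2⟩)))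
    · exact Or.inr (Or.inr (Or.inr (Or.inr (Or.inl ⟨h1, h2⟩))))
    · exact Or.inr (Or.inr (Or.inr (Or.inr (Or.inr (Or.inl ⟨h1, h2⟩)))))
    · exact Or.inr (Or.inr (Or.inr (Or.inr (Or.inr (Or.inr (Or.inl ⟨h1, h2⟩))))))
    · exact Or.inr (Or.inr (Or.inr (Or.inr (Or.inr (Or.inr (Or.inr (Or.inl ⟨h1, h2⟩)))))))
    · exact Or.inr (Or.inr (Or.inr (Or.inr (Or.inr (Or.inr (Or.inr (Or.inr (Or.inl ⟨h1, h2⟩))))))))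
    · exact Or.inr (Or.inr (Or.inr (Or.inr (Or.inr (Or.inr (Or.inr (Or.inr (Or.inr ⟨h1, h2⟩))))))))
  have hxw'G : (addDegTwoVertex G a b).Adj x (some wb) := by
    refine hGadj _ _ hxw' (noadj _ _ (by simp) (by simp) ?_)
    intro hmem
    rcases hnm _ _ hmem with ⟨h1,h2⟩|⟨h1,h2⟩|⟨h1,h2⟩|⟨h1,h2⟩|⟨h1,h2⟩|⟨h1,h2⟩|⟨h1,h2⟩|⟨h1,h2⟩|⟨h1,h2⟩|⟨h1,h2⟩
    · exact hnx h1.symm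
    · exact Option.some_ne_none wb h2
    · exact hxw' h2.symm
    · exact hww' h2.symm
    · exact hyw' h2.symm
    · exact hxy h1
    · exact hxy h1
    · exact hxw' h1
    · exact hxw' h1
    · exact hnx h1.symm
  have hw'wG : (addDegTwoVertex G a b).Adj (some wb) (some wa) := by
    refine hGadj _ _ (fun h => hww' h.symm) (noadj _ _ (by simp) (by simp) ?_)
    intro hmem
    rcases hnm _ _ hmem with ⟨h1,h2⟩|⟨h1,h2⟩|⟨h1,h2⟩|⟨h1,h2⟩|⟨h1,h2⟩|⟨h1,h2⟩|⟨h1,h2⟩|⟨h1,h2⟩|⟨h1,h2⟩|⟨h1,h2⟩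
    · exact Option.some_ne_none wb h1
    · exact hww' h1.symm
    · exact hww' h1.symm
    · exact hxw' h1.symm
    · exact hxw' h1.symm
    · exact hyw' h1.symm
    · exact hyw' h1.symm
    · exact hwy h2
    · exact Option.some_ne_none wa h2
    · exact Option.some_ne_none wb h1
  have hwyG : (addDegTwoVertex G a b).Adj (some wa) y := by
    refine hGadj _ _ hwy (noadj _ _ (by simp) (by simp) ?_)
    intro hmem
    rcases hnm _ _ hmem with ⟨h1,h2⟩|⟨h1,h2⟩|⟨h1,h2⟩|⟨h1,h2⟩|⟨h1,h2⟩|⟨h1,h2⟩|⟨h1,h2⟩|⟨h1,h2⟩|⟨h1,h2⟩|⟨h1,h2⟩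
    · exact Option.some_ne_none wa h1
    · exact hny h2.symm
    · exact hxy h2.symm
    · exact hwx h1
    · exact hwx h1
    · exact hwy h1
    · exact hwy h1
    · exact hww' h1
    · exact hww' h1
    · exact Option.some_ne_none wa h1
  clear hnm noadj hind hint hGadj hedges hsupp hlen3
  have m1 : ¬ G.Adj wa a ∨ True := Or.inr trivial
  rcases hx with rfl | rfl <;> rcases hy with rfl | rfl
  · exact absurd rfl hxy
  · -- x = some a, y = some b : path a - wb - wa - b
    have g1 : G.Adj a wb := adjA.mp hxw'G
    have g2 : G.Adj wb wa := adjA.mp hw'wG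
    have g3 : G.Adj wa b := adjA.mp hwyG
    have n1 : ¬ G.Adj wa a := ((compl_adj G wa a).mp (cadjA.mp hA1)).2
    have n2 : ¬ G.Adj a b := ((compl_adj G a b).mp (cadjA.mp hA2)).2
    have n3 : ¬ G.Adj b wb := ((compl_adj G b wb).mp (cadjA.mp hA3)).2
    have d1 : a ≠ wb := fun h => hxw' (by rw [h])
    have d2 : a ≠ wa := fun h => hwx (by rw [h])
    have d3 : wb ≠ wa := fun h => hww' (by rw [h])
    have d5 : wb ≠ b := fun h => hyw' (by rw [h])
    have d6 : wa ≠ b := fun h => hwy (by rw [h])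
    refine ⟨Walk.cons g1 (Walk.cons g2 (Walk.cons g3 Walk.nil)), ⟨?_, ?_⟩, ⟨1, by simp⟩⟩
    · rw [Walk.isPath_def]
      simp only [Walk.support_cons, Walk.support_nil, List.nodup_cons, List.mem_cons,
        List.mem_singleton, List.not_mem_nil, or_false, List.nodup_nil, and_true, not_or]
      exact ⟨⟨d1, d2, hab⟩, ⟨d3, d5⟩, d6, not_false⟩
    · intro u v hu hv huv
      rw [toSubgraph_adj_iff_edges]
      simp only [Walk.support_cons, Walk.support_nil, List.mem_cons,
        List.not_mem_nil, or_false] at hu hv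
      rcases hu with rfl|rfl|rfl|rfl <;> rcases hv with rfl|rfl|rfl|rfl <;>
        first
          | exact absurd huv G.irrefl
          | exact absurd huv.symm n1
          | exact absurd huv n1
          | exact absurd huv.symm n2
          | exact absurd huv n2
          | exact absurd huv.symm n3
          | exact absurd huv n3
          | simp
  · -- x = some b, y = some a : path b - wb - wa - a, then reverse
    have g1 : G.Adj b wb := adjA.mp hxw'G
    have g2 : G.Adj wb wa := adjA.mp hw'wG
    have g3 : G.Adj wa a := adjA.mp hwyG
    have n1 : ¬ G.Adj wa b := ((compl_adj G wa b).mp (cadjA.mp hA1)).2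
    have n2 : ¬ G.Adj b a := ((compl_adj G b a).mp (cadjA.mp hA2)).2
    have n3 : ¬ G.Adj a wb := ((compl_adj G a wb).mp (cadjA.mp hA3)).2
    have d1 : b ≠ wb := fun h => hxw' (by rw [h])
    have d2 : b ≠ wa := fun h => hwx (by rw [h])
    have d3 : wb ≠ wa := fun h => hww' (by rw [h])
    have d5 : wb ≠ a := fun h => hyw' (by rw [h])
    have d6 : wa ≠ a := fun h => hwy (by rw [h])
    refine ⟨(Walk.cons g1 (Walk.cons g2 (Walk.cons g3 Walk.nil))).reverse,
      reverse_induced ⟨?_, ?_⟩, by rw [Walk.length_reverse]; exact ⟨1, by simp⟩⟩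
    · rw [Walk.isPath_def]
      simp only [Walk.support_cons, Walk.support_nil, List.nodup_cons, List.mem_cons,
        List.mem_singleton, List.not_mem_nil, or_false, List.nodup_nil, and_true, not_or]
      exact ⟨⟨d1, d2, hab.symm⟩, ⟨d3, d5⟩, d6, not_false⟩
    · intro u v hu hv huv
      rw [toSubgraph_adj_iff_edges]
      simp only [Walk.support_cons, Walk.support_nil, List.mem_cons,
        List.not_mem_nil, or_false] at hu hv
      rcases hu with rfl|rfl|rfl|rfl <;> rcases hv with rfl|rfl|rfl|rfl <;>
        first
          | exact absurd huv G.irrefl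
          | exact absurd huv.symm n1
          | exact absurd huv n1
          | exact absurd huv.symm n2
          | exact absurd huv n2
          | exact absurd huv.symm n3
          | exact absurd huv n3
          | simp
  · exact absurd rfl hxy

end EPBAnti

/-- Let `G` be a Berge graph and `a, b` two non-adjacent vertices of
`G`. Then `{a, b}` is an even pair of `G` if and only if the graph obtained from `G`
by adding a new vertex adjacent exactly to `a` and `b` is Berge. -/
theorem evenPair_iff_addVertex_berge
    {V : Type*} [Fintype V] [DecidableEq V] (G : SimpleGraph V)
    (hG : IsBerge G) (a b : V) (hab : a ≠ b) (hnadj : ¬ G.Adj a b) :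
    (∀ p : G.Walk a b, IsInducedPathW G p → Even p.length) ↔
      IsBerge (addDegTwoVertex G a b) := by
  constructor
  · intro hyp
    constructor
    · rintro ⟨v₀, c, hc, hodd⟩
      by_cases hn : (none : Option V) ∈ c.support
      · obtain ⟨hc', hl'⟩ := hole_rotate hc hn
        obtain ⟨p, hp, hpodd⟩ := hole_through_none hab hc' (by rwa [hl'])
        have := hyp p hp
        rw [Nat.odd_iff] at hpodd
        rw [Nat.even_iff] at this
        omega
      · exact hole_avoid (fun u v => adjA) hG.1 c hc hodd hn
    · rintro ⟨v₀, c, hc, hodd⟩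
      by_cases hn : (none : Option V) ∈ c.support
      · obtain ⟨hc', hl'⟩ := hole_rotate hc hn
        obtain ⟨p, hp, hpodd⟩ := antihole_through_none hab hc' (by rwa [hl'])
        have := hyp p hp
        rw [Nat.odd_iff] at hpodd
        rw [Nat.even_iff] at this
        omega
      · exact hole_avoid (fun u v => cadjA) hG.2 c hc hodd hn
  · intro hB p hp
    by_contra hodd
    rw [Nat.not_even_iff_odd] at hodd
    exact hB.1 (backward_aux hab hnadj p hp hodd)
end

section
/- A simple graph G contains a hole of length at least 5 if and only if there exist vertices a, b, c of G inducing a chordless path a-b-c (that is, b is adjacent to both a and c, and a, c are not adjacent) such that a and c lie in the same connected component of the subgraph of G obtained by deleting all vertices of N(a) ∩ N(c) and all vertices of N(b) ∖ {a, c}. -/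
open SimpleGraph

section AuxChordal

variable {V : Type*} {G : SimpleGraph V}

private lemma getVert_injOn_of_isPath {u v : V} {p : G.Walk u v} (hp : p.IsPath) :
    ∀ i, i ≤ p.length → ∀ j, j ≤ p.length → p.getVert i = p.getVert j → i = j := by
  induction p with
  | nil => intro i hi j hj _; simp only [Walk.length_nil, Nat.le_zero] at hi hj; omega
  | @cons a b c h q ih =>
    intro i hi j hj hij
    rw [Walk.cons_isPath_iff] at hp
    match i, j with
    | 0, 0 => rfl
    | 0, j+1 =>
      exfalso
      apply hp.2
      rw [Walk.mem_support_iff_exists_getVert]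
      refine ⟨j, by simpa [Walk.getVert_cons_succ] using hij.symm, by
        simp only [Walk.length_cons] at hj; omega⟩
    | i+1, 0 =>
      exfalso
      apply hp.2
      rw [Walk.mem_support_iff_exists_getVert]
      refine ⟨i, by simpa [Walk.getVert_cons_succ] using hij, by
        simp only [Walk.length_cons] at hi; omega⟩
    | i+1, j+1 =>
      have := ih hp.1 i (by simp only [Walk.length_cons] at hi; omega) j
        (by simp only [Walk.length_cons] at hj; omega)
        (by simpa [Walk.getVert_cons_succ] using hij)
      omega

private lemma adj_start_eq {u v x : V} {p : G.Walk u v} (hp : p.IsPath)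
    (h : p.toSubgraph.Adj u x) : x = p.getVert 1 := by
  obtain ⟨i, heq, hi⟩ := (Walk.toSubgraph_adj_iff _).mp h
  rw [Sym2.eq_iff] at heq
  rcases heq with ⟨h1, h2⟩ | ⟨h1, h2⟩
  · have : i = 0 := getVert_injOn_of_isPath hp i hi.le 0 (Nat.zero_le _)
      (by rw [h1, Walk.getVert_zero])
    subst this; exact h2.symm
  · exfalso
    have : i + 1 = 0 := getVert_injOn_of_isPath hp (i+1) hi 0 (Nat.zero_le _)
      (by rw [h2, Walk.getVert_zero])
    omega

private lemma adj_end_eq {u v x : V} {p : G.Walk u v} (hp : p.IsPath)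
    (h : p.toSubgraph.Adj v x) : ∃ j, j + 1 = p.length ∧ x = p.getVert j := by
  obtain ⟨i, heq, hi⟩ := (Walk.toSubgraph_adj_iff _).mp h
  rw [Sym2.eq_iff] at heq
  rcases heq with ⟨h1, h2⟩ | ⟨h1, h2⟩
  · exfalso
    have : i = p.length := getVert_injOn_of_isPath hp i hi.le p.length le_rfl
      (by rw [h1, Walk.getVert_length])
    omega
  · have hil : i + 1 = p.length := getVert_injOn_of_isPath hp (i+1) hi p.length le_rfl
      (by rw [h2, Walk.getVert_length])
    exact ⟨i, hil, h1.symm⟩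

private lemma edge_mem_of_length_one {x y : V} (w : G.Walk x y) (h : w.length = 1) :
    s(x, y) ∈ w.edges := by
  have h0 : w.toSubgraph.Adj (w.getVert 0) (w.getVert 1) :=
    w.toSubgraph_adj_getVert (by omega)
  rw [Walk.getVert_zero] at h0
  have h1 : w.getVert 1 = y := by rw [← h, Walk.getVert_length]
  rw [h1] at h0
  exact (w.mem_edges_toSubgraph).mp (Subgraph.mem_edgeSet.mpr h0)

private lemma chordless_of_min {a c : V} [DecidableEq V] {q : G.Walk a c}
    (hmin : ∀ w : G.Walk a c, q.length ≤ w.length) :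
    ∀ x y, x ∈ q.support → y ∈ q.support → G.Adj x y → q.toSubgraph.Adj x y := by
  intro x y hx hy hxy
  have hq := q.take_spec hx
  have hlen : (q.takeUntil x hx).length + (q.dropUntil x hx).length = q.length := by
    have := congrArg Walk.length hq; rwa [Walk.length_append] at this
  have hy : y ∈ (q.takeUntil x hx).support ∨ y ∈ (q.dropUntil x hx).support := by
    rw [← hq] at hy; rwa [Walk.mem_support_append_iff] at hy
  have toAdj : s(x, y) ∈ q.edges → q.toSubgraph.Adj x y := fun he =>
    Subgraph.mem_edgeSet.mp ((q.mem_edges_toSubgraph).mpr he)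
  rcases hy with hyt | hyd
  · -- y before x
    set t := q.takeUntil x hx with htdef
    have hts := t.take_spec hyt
    have hlen2 : (t.takeUntil y hyt).length + (t.dropUntil y hyt).length = t.length := by
      have := congrArg Walk.length hts; rwa [Walk.length_append] at this
    have hmin := hmin ((t.takeUntil y hyt).append (Walk.cons hxy.symm (q.dropUntil x hx)))
    rw [Walk.length_append, Walk.length_cons] at hmin
    have hne : (t.dropUntil y hyt).length ≠ 0 := fun h0 =>
      hxy.ne (Walk.eq_of_length_eq_zero h0).symm
    have h1 : (t.dropUntil y hyt).length = 1 := by omega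
    have he : s(y, x) ∈ (t.dropUntil y hyt).edges := edge_mem_of_length_one _ h1
    apply toAdj
    rw [Sym2.eq_swap]
    exact (q.edges_takeUntil_subset hx) ((t.edges_dropUntil_subset hyt) he)
  · -- y after x
    set d := q.dropUntil x hx with hddef
    have hds := d.take_spec hyd
    have hlen2 : (d.takeUntil y hyd).length + (d.dropUntil y hyd).length = d.length := by
      have := congrArg Walk.length hds; rwa [Walk.length_append] at this
    have hmin := hmin ((q.takeUntil x hx).append (Walk.cons hxy (d.dropUntil y hyd)))
    rw [Walk.length_append, Walk.length_cons] at hmin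
    have hne : (d.takeUntil y hyd).length ≠ 0 := fun h0 =>
      hxy.ne (Walk.eq_of_length_eq_zero h0)
    have h1 : (d.takeUntil y hyd).length = 1 := by omega
    have he : s(x, y) ∈ (d.takeUntil y hyd).edges := edge_mem_of_length_one _ h1
    exact toAdj ((q.edges_dropUntil_subset hx) ((d.edges_takeUntil_subset hyd) he))

private lemma support_cases {u v : V} (w : G.Walk u v) :
    ∀ x ∈ w.support, x = v ∨ ∃ y, G.Adj x y := by
  induction w with
  | nil => intro x hx; rw [Walk.support_nil, List.mem_singleton] at hx; exact Or.inl hx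
  | @cons a b c h q ih =>
    intro x hx
    rw [Walk.support_cons, List.mem_cons] at hx
    rcases hx with rfl | hx
    · exact Or.inr ⟨b, h⟩
    · exact ih x hx

end AuxChordal

private def auxH {V : Type*} (G : SimpleGraph V) (a b c : V) : SimpleGraph V where
  Adj x y := G.Adj x y ∧
      (¬(G.Adj a x ∧ G.Adj c x) ∧ ¬(G.Adj b x ∧ x ≠ a ∧ x ≠ c)) ∧
      (¬(G.Adj a y ∧ G.Adj c y) ∧ ¬(G.Adj b y ∧ y ≠ a ∧ y ≠ c))
  symm := ⟨fun x y h => ⟨h.1.symm, h.2.2, h.2.1⟩⟩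
  loopless := ⟨fun x h => h.1.ne rfl⟩

private lemma backward_dir {V : Type*} [DecidableEq V] (G : SimpleGraph V)
    (a b c : V) (hab : G.Adj a b) (hbc : G.Adj b c) (hac : a ≠ c) (hnac : ¬ G.Adj a c)
    (p : G.Walk a c) (hp : ∀ x ∈ p.support,
      ¬ (G.Adj a x ∧ G.Adj c x) ∧ ¬ (G.Adj b x ∧ x ≠ a ∧ x ≠ c)) :
    ∃ (v : V) (hc : G.Walk v v), IsHoleW G hc ∧ 5 ≤ hc.length := by
  classical
  set H := auxH G a b c with hHdef
  have hHadj : ∀ {x y : V}, H.Adj x y ↔ (G.Adj x y ∧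
      (¬(G.Adj a x ∧ G.Adj c x) ∧ ¬(G.Adj b x ∧ x ≠ a ∧ x ≠ c)) ∧
      (¬(G.Adj a y ∧ G.Adj c y) ∧ ¬(G.Adj b y ∧ y ≠ a ∧ y ≠ c))) := Iff.rfl
  have hpe : ∀ e ∈ p.edges, e ∈ H.edgeSet := by
    intro e
    induction e using Sym2.ind with
    | _ x y =>
      intro he
      rw [SimpleGraph.mem_edgeSet, hHadj]
      exact ⟨p.edges_subset_edgeSet he, hp x (p.fst_mem_support_of_mem_edges he),
        hp y (p.snd_mem_support_of_mem_edges he)⟩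
  have hne : ∃ n, ∃ w : H.Walk a c, w.length = n := ⟨(p.transfer H hpe).length, _, rfl⟩
  obtain ⟨w, hwlen⟩ := Nat.find_spec hne
  set q := w.bypass with hqdef
  have hqpath : q.IsPath := w.bypass_isPath
  have hmin : ∀ w' : H.Walk a c, q.length ≤ w'.length := fun w' =>
    le_trans (le_trans w.length_bypass_le hwlen.le) (Nat.find_min' hne ⟨w', rfl⟩)
  have hchord := chordless_of_min hmin
  have hsupA : ∀ x ∈ q.support, ¬(G.Adj a x ∧ G.Adj c x) ∧ ¬(G.Adj b x ∧ x ≠ a ∧ x ≠ c) := by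
    intro x hx
    rcases support_cases q x hx with rfl | ⟨y, hy⟩
    · exact hp x p.end_mem_support
    · exact (hHadj.mp hy).2.1
  have hq3 : 3 ≤ q.length := by
    have h0 : q.length ≠ 0 := fun h => hac (Walk.eq_of_length_eq_zero h)
    have h1 : q.length ≠ 1 := by
      intro h
      have h0' := q.toSubgraph_adj_getVert (i := 0) (by omega)
      rw [Walk.getVert_zero] at h0'
      have h2 : q.getVert 1 = c := by rw [← h]; exact q.getVert_length
      rw [h2] at h0'
      exact hnac (hHadj.mp h0'.adj_sub).1
    have h2 : q.length ≠ 2 := by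
      intro h
      have e0 := q.toSubgraph_adj_getVert (i := 0) (by omega)
      have e1 := q.toSubgraph_adj_getVert (i := 1) (by omega)
      rw [Walk.getVert_zero] at e0
      have hgc : q.getVert 2 = c := by rw [← h]; exact q.getVert_length
      rw [hgc] at e1
      have hmem : q.getVert 1 ∈ q.support :=
        Walk.mem_support_iff_exists_getVert.mpr ⟨1, rfl, by omega⟩
      exact (hsupA _ hmem).1 ⟨(hHadj.mp e0.adj_sub).1, ((hHadj.mp e1.adj_sub).1).symm⟩
    omega
  have hbq : b ∉ q.support := fun hb => (hsupA b hb).1 ⟨hab, hbc.symm⟩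
  have hqe : ∀ e ∈ q.edges, e ∈ G.edgeSet := by
    intro e
    induction e using Sym2.ind with
    | _ x y =>
      intro he
      rw [SimpleGraph.mem_edgeSet]
      exact (hHadj.mp (q.edges_subset_edgeSet he)).1
  set q' : G.Walk a c := q.transfer G hqe with hq'def
  have hsupp' : q'.support = q.support := q.support_transfer hqe
  have hedges' : q'.edges = q.edges := q.edges_transfer hqe
  have hq'path : q'.IsPath := by
    rw [Walk.isPath_def, hsupp']; exact hqpath.support_nodup
  have hbq' : b ∉ q'.support := by rwa [hsupp']
  have hw2path : (q'.concat hbc.symm).IsPath := by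
    rw [Walk.isPath_def, Walk.support_concat]
    rw [List.nodup_append]
    refine ⟨hq'path.support_nodup, List.nodup_singleton b, ?_⟩
    intro z hz _ hz' heq
    subst heq
    rw [List.mem_singleton] at hz'
    subst hz'
    exact hbq' hz
  have hsb : s(b, a) ∉ (q'.concat hbc.symm).edges := by
    rw [Walk.edges_concat, List.concat_eq_append, List.mem_append]
    rintro (h | h)
    · exact hbq' (q'.fst_mem_support_of_mem_edges h)
    · rw [List.mem_singleton, Sym2.eq_iff] at h
      rcases h with ⟨h1, _⟩ | ⟨_, h2⟩
      · exact hbc.ne h1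
      · exact hac h2
  set cyc : G.Walk b b := Walk.cons hab.symm (q'.concat hbc.symm) with hcycdef
  have hcyccyc : cyc.IsCycle := (Walk.cons_isCycle_iff _ hab.symm).mpr ⟨hw2path, hsb⟩
  have hlq : cyc.length = q.length + 2 := by
    rw [hcycdef, Walk.length_cons, Walk.length_concat, hq'def, Walk.length_transfer]
  have hcycedges : cyc.edges = s(b, a) :: (q'.edges ++ [s(c, b)]) := by
    rw [hcycdef, Walk.edges_cons, Walk.edges_concat, List.concat_eq_append]
  have toAdj : ∀ {x y : V}, s(x, y) ∈ cyc.edges → cyc.toSubgraph.Adj x y := fun he =>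
    Subgraph.mem_edgeSet.mp ((cyc.mem_edges_toSubgraph).mpr he)
  have hsupp : ∀ z, z ∈ cyc.support → z = b ∨ z ∈ q.support := by
    intro z hz
    rw [hcycdef, Walk.support_cons, List.mem_cons] at hz
    rcases hz with rfl | hz
    · exact Or.inl rfl
    · rw [Walk.support_concat, List.mem_append, List.mem_singleton] at hz
      rcases hz with hz | rfl
      · right; rwa [hsupp'] at hz
      · exact Or.inl rfl
  refine ⟨b, cyc, ⟨hcyccyc, by omega, ?_⟩, by omega⟩
  intro x y hx hy hxy
  rcases hsupp x hx with rfl | hxq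
  · rcases hsupp y hy with rfl | hyq
    · exact absurd rfl hxy.ne
    · have hy2 := (hsupA y hyq).2
      have hy' : y = a ∨ y = c := by
        by_contra hcon
        push_neg at hcon
        exact hy2 ⟨hxy, hcon.1, hcon.2⟩
      rcases hy' with rfl | rfl
      · exact toAdj (by rw [hcycedges]; exact List.mem_cons_self)
      · refine (toAdj ?_).symm
        rw [hcycedges]
        exact List.mem_cons_of_mem _ (List.mem_append_right _ (List.mem_singleton_self _))
  · rcases hsupp y hy with rfl | hyq
    · have hx2 := (hsupA x hxq).2
      have hx' : x = a ∨ x = c := by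
        by_contra hcon
        push_neg at hcon
        exact hx2 ⟨hxy.symm, hcon.1, hcon.2⟩
      rcases hx' with rfl | rfl
      · refine (toAdj ?_).symm
        rw [hcycedges]; exact List.mem_cons_self
      · refine toAdj ?_
        rw [hcycedges]
        exact List.mem_cons_of_mem _ (List.mem_append_right _ (List.mem_singleton_self _))
    · have hH : H.Adj x y := hHadj.mpr ⟨hxy, hsupA x hxq, hsupA y hyq⟩
      have := hchord x y hxq hyq hH
      have he : s(x, y) ∈ q.edges := (q.mem_edges_toSubgraph).mp (Subgraph.mem_edgeSet.mpr this)
      refine toAdj ?_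
      rw [hcycedges]
      exact List.mem_cons_of_mem _ (List.mem_append_left _ (by rwa [hedges']))

private lemma forward_dir {V : Type*} (G : SimpleGraph V) (v : V) (hc : G.Walk v v)
    (hcyc : hc.IsCycle)
    (hind : ∀ x y : V, x ∈ hc.support → y ∈ hc.support → G.Adj x y → hc.toSubgraph.Adj x y)
    (hlen : 5 ≤ hc.length) :
    ∃ a b c : V, G.Adj a b ∧ G.Adj b c ∧ a ≠ c ∧ ¬ G.Adj a c ∧
      ∃ p : G.Walk a c, ∀ x ∈ p.support,
        ¬ (G.Adj a x ∧ G.Adj c x) ∧ ¬ (G.Adj b x ∧ x ≠ a ∧ x ≠ c) := by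
  cases hc with
  | nil => simp at hlen
  | @cons _ w _ h₁ q₁ =>
    cases q₁ with
    | nil => simp at hlen
    | @cons _ u _ h₂ r =>
      have hlen' : 3 ≤ r.length := by
        simp only [Walk.length_cons] at hlen; omega
      have hnd : w ∉ r.support ∧ r.support.Nodup := by
        have := hcyc.2
        simpa [Walk.support_cons, List.nodup_cons] using this
      have hrpath : r.IsPath := (Walk.isPath_def _).mpr hnd.2
      have humem : u ∈ r.support := r.start_mem_support
      have hvmem : v ∈ r.support := r.end_mem_support
      have hwu : w ≠ u := fun h => hnd.1 (h ▸ humem)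
      have hvu : v ≠ u := by
        intro hvu
        have h0 : r.getVert 0 = r.getVert r.length := by
          rw [Walk.getVert_zero, Walk.getVert_length, hvu]
        have := getVert_injOn_of_isPath hrpath 0 (Nat.zero_le _) r.length le_rfl h0
        omega
      have hdecomp : ∀ x y : V, (Walk.cons h₁ (Walk.cons h₂ r)).toSubgraph.Adj x y →
          s(x, y) = s(v, w) ∨ s(x, y) = s(w, u) ∨ r.toSubgraph.Adj x y := by
        intro x y hxy
        simp only [Walk.toSubgraph, Subgraph.sup_adj, subgraphOfAdj_adj] at hxy
        tauto
      have hmemcyc : ∀ x ∈ r.support, x ∈ (Walk.cons h₁ (Walk.cons h₂ r)).support := by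
        intro x hx
        simp only [Walk.support_cons, List.mem_cons]
        exact Or.inr (Or.inr hx)
      have hvc : v ∈ (Walk.cons h₁ (Walk.cons h₂ r)).support := Walk.start_mem_support _
      have hwc : w ∈ (Walk.cons h₁ (Walk.cons h₂ r)).support := by
        simp [Walk.support_cons]
      refine ⟨v, w, u, h₁, h₂, hvu, ?_, r.reverse, ?_⟩
      · -- ¬ G.Adj v u
        intro hadj
        have hcs := hind v u hvc (hmemcyc u humem) hadj
        rcases hdecomp _ _ hcs with he | he | he
        · rw [Sym2.eq_iff] at he
          rcases he with ⟨_, h2⟩ | ⟨h1, _⟩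
          · exact hwu h2.symm
          · exact h₁.ne h1
        · rw [Sym2.eq_iff] at he
          rcases he with ⟨h1, _⟩ | ⟨h1, _⟩
          · exact h₁.ne h1
          · exact hvu h1
        · obtain ⟨j, hj, hju⟩ := adj_end_eq hrpath he
          have : j = 0 := getVert_injOn_of_isPath hrpath j (by omega) 0 (Nat.zero_le _)
            (by rw [Walk.getVert_zero, ← hju])
          omega
      · intro x hx
        rw [Walk.support_reverse, List.mem_reverse] at hx
        have hxw : x ≠ w := fun h => hnd.1 (h ▸ hx)
        constructor
        · rintro ⟨hvx, hux⟩
          have hx1 := hind v x hvc (hmemcyc x hx) hvx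
          have hx2 := hind u x (hmemcyc u humem) (hmemcyc x hx) hux
          have hr1 : r.toSubgraph.Adj v x := by
            rcases hdecomp _ _ hx1 with he | he | he
            · rw [Sym2.eq_iff] at he
              rcases he with ⟨_, h2⟩ | ⟨h1, _⟩
              · exact absurd h2 hxw
              · exact absurd h1 h₁.ne
            · rw [Sym2.eq_iff] at he
              rcases he with ⟨h1, _⟩ | ⟨h1, _⟩
              · exact absurd h1 h₁.ne
              · exact absurd h1 hvu
            · exact he
          have hr2 : r.toSubgraph.Adj u x := by
            rcases hdecomp _ _ hx2 with he | he | he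
            · rw [Sym2.eq_iff] at he
              rcases he with ⟨h1, _⟩ | ⟨h1, _⟩
              · exact absurd h1 (Ne.symm hvu)
              · exact absurd h1 (Ne.symm hwu)
            · rw [Sym2.eq_iff] at he
              rcases he with ⟨h1, _⟩ | ⟨_, h2⟩
              · exact absurd h1 (Ne.symm hwu)
              · exact absurd h2 hxw
            · exact he
          obtain ⟨j, hj, hjx⟩ := adj_end_eq hrpath hr1
          have hx1' : x = r.getVert 1 := adj_start_eq hrpath hr2
          have : j = 1 := getVert_injOn_of_isPath hrpath j (by omega) 1 (by omega)
            (by rw [← hjx, ← hx1'])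
          omega
        · rintro ⟨hwx, hxv, hxu⟩
          have hx3 := hind w x hwc (hmemcyc x hx) hwx
          rcases hdecomp _ _ hx3 with he | he | he
          · rw [Sym2.eq_iff] at he
            rcases he with ⟨h1, _⟩ | ⟨_, h2⟩
            · exact h₁.ne h1.symm
            · exact hxv h2
          · rw [Sym2.eq_iff] at he
            rcases he with ⟨_, h2⟩ | ⟨h1, _⟩
            · exact hxu h2
            · exact hwu h1
          · have : w ∈ r.support := by
              have := he.fst_mem
              rwa [Walk.verts_toSubgraph] at this
            exact hnd.1 this

/-- A graph `G` contains a hole of length at least `5` if and only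
if there are vertices `a, b, c` inducing a chordless path `a-b-c` such that `a` and
`c` lie in the same connected component of the graph obtained from `G` by deleting
the vertices of `N(a) ∩ N(c)` and those of `N(b) ∖ {a, c}`. -/
theorem hole_ge_five_iff
    {V : Type*} [Fintype V] [DecidableEq V] (G : SimpleGraph V) :
    (∃ (v : V) (hc : G.Walk v v), IsHoleW G hc ∧ 5 ≤ hc.length) ↔
    ∃ a b c : V, G.Adj a b ∧ G.Adj b c ∧ a ≠ c ∧ ¬ G.Adj a c ∧
      ∃ p : G.Walk a c, ∀ x ∈ p.support,
        ¬ (G.Adj a x ∧ G.Adj c x) ∧ ¬ (G.Adj b x ∧ x ≠ a ∧ x ≠ c) := by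
  constructor
  · rintro ⟨v, hc, ⟨hcyc, -, hind⟩, hlen⟩
    exact forward_dir G v hc hcyc hind hlen
  · rintro ⟨a, b, c, hab, hbc, hac, hnac, p, hp⟩
    exact backward_dir G a b c hab hbc hac hnac p hp
end

section
/- Let R be a subdivision of K4 and let F be the line-graph of R. Then R is a proper subdivision of K4 (that is, R ≠ K4) if and only if F has a vertex that lies in exactly one triangle of F (a triangle being a set of three pairwise adjacent vertices). -/
open SimpleGraph

/-- Two walks meet exactly in the vertex `e`. -/
def MeetOnly {W : Type*} (R : SimpleGraph W) (e : W) {a b c d : W}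
    (P : R.Walk a b) (Q : R.Walk c d) : Prop :=
  ∀ x : W, x ∈ P.support → x ∈ Q.support → x = e

/-- Two walks are vertex-disjoint. -/
def DisjW {W : Type*} (R : SimpleGraph W) {a b c d : W}
    (P : R.Walk a b) (Q : R.Walk c d) : Prop :=
  ∀ x : W, x ∈ P.support → x ∉ Q.support

/-- `R` is a subdivision of `K₄`: there are four branch vertices `a, b, c, d` and six
internally disjoint paths joining them (one for each pair), which together cover all
vertices and all edges of `R`. -/
def IsSubdivK4 {W : Type*} (R : SimpleGraph W) : Prop :=
  ∃ (a b c d : W) (Pab : R.Walk a b) (Pac : R.Walk a c) (Pad : R.Walk a d)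
    (Pbc : R.Walk b c) (Pbd : R.Walk b d) (Pcd : R.Walk c d),
    a ≠ b ∧ a ≠ c ∧ a ≠ d ∧ b ≠ c ∧ b ≠ d ∧ c ≠ d ∧
    Pab.IsPath ∧ Pac.IsPath ∧ Pad.IsPath ∧ Pbc.IsPath ∧ Pbd.IsPath ∧ Pcd.IsPath ∧
    MeetOnly R a Pab Pac ∧ MeetOnly R a Pab Pad ∧ MeetOnly R a Pac Pad ∧
    MeetOnly R b Pab Pbc ∧ MeetOnly R b Pab Pbd ∧ MeetOnly R b Pbc Pbd ∧
    MeetOnly R c Pac Pbc ∧ MeetOnly R c Pac Pcd ∧ MeetOnly R c Pbc Pcd ∧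
    MeetOnly R d Pad Pbd ∧ MeetOnly R d Pad Pcd ∧ MeetOnly R d Pbd Pcd ∧
    DisjW R Pab Pcd ∧ DisjW R Pac Pbd ∧ DisjW R Pad Pbc ∧
    (∀ x : W, x ∈ Pab.support ∨ x ∈ Pac.support ∨ x ∈ Pad.support ∨
      x ∈ Pbc.support ∨ x ∈ Pbd.support ∨ x ∈ Pcd.support) ∧
    (∀ x y : W, R.Adj x y →
      Pab.toSubgraph.Adj x y ∨ Pac.toSubgraph.Adj x y ∨ Pad.toSubgraph.Adj x y ∨
      Pbc.toSubgraph.Adj x y ∨ Pbd.toSubgraph.Adj x y ∨ Pcd.toSubgraph.Adj x y)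

/-- A triangle of a graph: a set of three pairwise adjacent vertices. -/
def IsTriangleSet {α : Type*} (F : SimpleGraph α) (t : Finset α) : Prop :=
  t.card = 3 ∧ ∀ x ∈ t, ∀ y ∈ t, x ≠ y → F.Adj x y

set_option maxHeartbeats 1000000

section AuxLemmas

variable {W : Type*} {R : SimpleGraph W}


variable {W : Type*} {R : SimpleGraph W}

lemma auxGetVertMem {u v : W} {p : R.Walk u v} {i : ℕ} (hi : i ≤ p.length) :
    p.getVert i ∈ p.support :=
  Walk.mem_support_iff_exists_getVert.mpr ⟨i, rfl, hi⟩

lemma auxGetVertInj {u v : W} (p : R.Walk u v) :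
    p.IsPath → ∀ i j : ℕ, i ≤ p.length → j ≤ p.length →
      p.getVert i = p.getVert j → i = j := by
  induction p with
  | nil => intro _ i j hi hj _; simp only [Walk.length_nil, Nat.le_zero] at hi hj; omega
  | cons hadj q ih =>
    intro hp i j hi hj h
    obtain ⟨hq, ha⟩ := (Walk.cons_isPath_iff _ _).mp hp
    match i, j with
    | 0, 0 => rfl
    | 0, j+1 =>
      exfalso; apply ha
      rw [Walk.getVert_zero, Walk.getVert_cons_succ] at h
      exact h ▸ auxGetVertMem (by simpa [Nat.succ_le_succ_iff] using hj)
    | i+1, 0 =>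
      exfalso; apply ha
      rw [Walk.getVert_zero, Walk.getVert_cons_succ] at h
      exact h ▸ auxGetVertMem (by simpa [Nat.succ_le_succ_iff] using hi)
    | i+1, j+1 =>
      rw [Walk.getVert_cons_succ, Walk.getVert_cons_succ] at h
      have := ih hq i j (by simpa [Nat.succ_le_succ_iff] using hi)
        (by simpa [Nat.succ_le_succ_iff] using hj) h
      omega

lemma auxAdjStart {u v z : W} {p : R.Walk u v} (hp : p.IsPath)
    (h : p.toSubgraph.Adj u z) : z = p.getVert 1 := by
  obtain ⟨i, hs, hi⟩ := (Walk.toSubgraph_adj_iff _).mp h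
  rcases Sym2.eq_iff.mp hs with ⟨h1, h2⟩ | ⟨h1, h2⟩
  · have : i = 0 := auxGetVertInj p hp i 0 hi.le (Nat.zero_le _)
      (by rw [p.getVert_zero]; exact h1)
    subst this; exact h2.symm
  · exfalso
    have : i + 1 = 0 := auxGetVertInj p hp (i+1) 0 hi (Nat.zero_le _)
      (by rw [p.getVert_zero]; exact h2)
    omega

lemma auxAdjSecond {u v z : W} {p : R.Walk u v} (hp : p.IsPath) (hlen : 2 ≤ p.length)
    (h : p.toSubgraph.Adj (p.getVert 1) z) : z = u ∨ z = p.getVert 2 := by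
  obtain ⟨i, hs, hi⟩ := (Walk.toSubgraph_adj_iff _).mp h
  rcases Sym2.eq_iff.mp hs with ⟨h1, h2⟩ | ⟨h1, h2⟩
  · have : i = 1 := auxGetVertInj p hp i 1 hi.le (by omega) h1
    subst this; exact Or.inr h2.symm
  · have : i + 1 = 1 := auxGetVertInj p hp (i+1) 1 hi (by omega) h2
    have hi0 : i = 0 := by omega
    subst hi0
    exact Or.inl (by rw [← p.getVert_zero]; exact h1.symm)

lemma auxMemOfAdj {a b s t : W} {p : R.Walk a b} (h : p.toSubgraph.Adj s t) :
    s ∈ p.support := (Walk.mem_verts_toSubgraph _).mp h.fst_mem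

lemma auxStarAdj {p q1 q2 : W} (h1 : R.Adj p q1) (h2 : R.Adj p q2) (hne : q1 ≠ q2) :
    R.lineGraph.Adj ⟨s(p,q1), h1⟩ ⟨s(p,q2), h2⟩ := by
  rw [lineGraph_adj_iff_exists]
  refine ⟨?_, p, Sym2.mem_iff.mpr (Or.inl rfl), Sym2.mem_iff.mpr (Or.inl rfl)⟩
  intro hcon
  have := Subtype.ext_iff.mp hcon
  simp only at this
  rcases Sym2.eq_iff.mp this with ⟨_, hq⟩ | ⟨ha, hb⟩
  · exact hne hq
  · exact hne (hb.trans ha)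

lemma auxStarTriangle [DecidableEq W] {p q1 q2 q3 : W}
    (h1 : R.Adj p q1) (h2 : R.Adj p q2) (h3 : R.Adj p q3)
    (h12 : q1 ≠ q2) (h13 : q1 ≠ q3) (h23 : q2 ≠ q3) :
    IsTriangleSet R.lineGraph {⟨s(p,q1), h1⟩, ⟨s(p,q2), h2⟩, ⟨s(p,q3), h3⟩} := by
  have a12 := auxStarAdj h1 h2 h12
  have a13 := auxStarAdj h1 h3 h13
  have a23 := auxStarAdj h2 h3 h23
  constructor
  · rw [Finset.card_insert_of_notMem (by
      simp only [Finset.mem_insert, Finset.mem_singleton]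
      push_neg
      exact ⟨a12.ne, a13.ne⟩),
      Finset.card_insert_of_notMem (by simpa using a23.ne), Finset.card_singleton]
  · intro x hx y hy hxy
    simp only [Finset.mem_insert, Finset.mem_singleton] at hx hy
    rcases hx with rfl|rfl|rfl <;> rcases hy with rfl|rfl|rfl <;>
      first
        | exact absurd rfl hxy
        | exact a12 | exact a13 | exact a23
        | exact a12.symm | exact a13.symm | exact a23.symm






variable {W : Type*} {R : SimpleGraph W}








lemma auxKey [DecidableEq W] (R : SimpleGraph W) (u v c d : W)
    (P1 : R.Walk u v) (P2 : R.Walk u c) (P3 : R.Walk u d)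
    (P4 : R.Walk v c) (P5 : R.Walk v d) (P6 : R.Walk c d)
    (huv : u ≠ v) (huc : u ≠ c) (hud : u ≠ d)
    (hp1 : P1.IsPath) (hp2 : P2.IsPath) (hp3 : P3.IsPath)
    (m12 : MeetOnly R u P1 P2) (m13 : MeetOnly R u P1 P3) (m23 : MeetOnly R u P2 P3)
    (m14 : MeetOnly R v P1 P4) (m15 : MeetOnly R v P1 P5)
    (d16 : DisjW R P1 P6)
    (cover : ∀ x y : W, R.Adj x y →
      P1.toSubgraph.Adj x y ∨ P2.toSubgraph.Adj x y ∨ P3.toSubgraph.Adj x y ∨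
      P4.toSubgraph.Adj x y ∨ P5.toSubgraph.Adj x y ∨ P6.toSubgraph.Adj x y)
    (hlen : 2 ≤ P1.length) :
    ∃ e : R.edgeSet, ∃! t : Finset R.edgeSet, e ∈ t ∧ IsTriangleSet R.lineGraph t := by
  have h2pos : 1 ≤ P2.length := by
    by_contra hcon
    have h0 : P2.length = 0 := by omega
    apply huc
    have := P2.getVert_length
    rwa [h0, P2.getVert_zero] at this
  have h3pos : 1 ≤ P3.length := by
    by_contra hcon
    have h0 : P3.length = 0 := by omega
    apply hud
    have := P3.getVert_length
    rwa [h0, P3.getVert_zero] at this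
  set x := P1.getVert 1 with hxdef
  set x' := P1.getVert 2 with hx'def
  set y2 := P2.getVert 1 with hy2def
  set y3 := P3.getVert 1 with hy3def
  have hux : u ≠ x := fun hh => by
    have := auxGetVertInj P1 hp1 0 1 (by omega) (by omega)
      (by rw [P1.getVert_zero]; exact hh)
    omega
  have hux' : u ≠ x' := fun hh => by
    have := auxGetVertInj P1 hp1 0 2 (by omega) (by omega)
      (by rw [P1.getVert_zero]; exact hh)
    omega
  have hxx' : x ≠ x' := fun hh => by
    have := auxGetVertInj P1 hp1 1 2 (by omega) (by omega) hh
    omega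
  have hxv : x ≠ v := fun hh => by
    have := auxGetVertInj P1 hp1 1 P1.length (by omega) le_rfl
      (by rw [P1.getVert_length]; exact hh)
    omega
  have huy2 : u ≠ y2 := fun hh => by
    have := auxGetVertInj P2 hp2 0 1 (by omega) (by omega)
      (by rw [P2.getVert_zero]; exact hh)
    omega
  have huy3 : u ≠ y3 := fun hh => by
    have := auxGetVertInj P3 hp3 0 1 (by omega) (by omega)
      (by rw [P3.getVert_zero]; exact hh)
    omega
  have hxS1 : x ∈ P1.support := auxGetVertMem (by omega)
  have hx'S1 : x' ∈ P1.support := auxGetVertMem (by omega)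
  have hy2S2 : y2 ∈ P2.support := auxGetVertMem (by omega)
  have hy3S3 : y3 ∈ P3.support := auxGetVertMem (by omega)
  have hx2 : x ∉ P2.support := fun hh => hux (m12 x hxS1 hh).symm
  have hx3 : x ∉ P3.support := fun hh => hux (m13 x hxS1 hh).symm
  have hx4 : x ∉ P4.support := fun hh => hxv (m14 x hxS1 hh)
  have hx5 : x ∉ P5.support := fun hh => hxv (m15 x hxS1 hh)
  have hx6 : x ∉ P6.support := d16 x hxS1
  have hx'2 : x' ∉ P2.support := fun hh => hux' (m12 x' hx'S1 hh).symm
  have hx'3 : x' ∉ P3.support := fun hh => hux' (m13 x' hx'S1 hh).symm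
  have hxy2 : x ≠ y2 := fun hh => hx2 (hh ▸ hy2S2)
  have hxy3 : x ≠ y3 := fun hh => hx3 (hh ▸ hy3S3)
  have hx'y2 : x' ≠ y2 := fun hh => hx'2 (hh ▸ hy2S2)
  have hx'y3 : x' ≠ y3 := fun hh => hx'3 (hh ▸ hy3S3)
  have hy23 : y2 ≠ y3 := fun hh => huy2 (m23 y2 hy2S2 (hh ▸ hy3S3)).symm
  have hu4 : u ∉ P4.support := fun hh => huv (m14 u P1.start_mem_support hh)
  have hu5 : u ∉ P5.support := fun hh => huv (m15 u P1.start_mem_support hh)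
  have hu6 : u ∉ P6.support := d16 u P1.start_mem_support
  have hNu : ∀ z, R.Adj u z → z = x ∨ z = y2 ∨ z = y3 := by
    intro z hz
    rcases cover u z hz with hh|hh|hh|hh|hh|hh
    · exact Or.inl (auxAdjStart hp1 hh)
    · exact Or.inr (Or.inl (auxAdjStart hp2 hh))
    · exact Or.inr (Or.inr (auxAdjStart hp3 hh))
    · exact absurd (auxMemOfAdj hh) hu4
    · exact absurd (auxMemOfAdj hh) hu5
    · exact absurd (auxMemOfAdj hh) hu6
  have hNx : ∀ z, R.Adj x z → z = u ∨ z = x' := by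
    intro z hz
    rcases cover x z hz with hh|hh|hh|hh|hh|hh
    · exact auxAdjSecond hp1 hlen hh
    · exact absurd (auxMemOfAdj hh) hx2
    · exact absurd (auxMemOfAdj hh) hx3
    · exact absurd (auxMemOfAdj hh) hx4
    · exact absurd (auxMemOfAdj hh) hx5
    · exact absurd (auxMemOfAdj hh) hx6
  have hadj_ux : R.Adj u x := by
    have := P1.adj_getVert_succ (show 0 < P1.length by omega)
    rwa [P1.getVert_zero] at this
  have hadj_xx' : R.Adj x x' := P1.adj_getVert_succ (show 1 < P1.length by omega)
  have hadj_uy2 : R.Adj u y2 := by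
    have := P2.adj_getVert_succ (show 0 < P2.length by omega)
    rwa [P2.getVert_zero] at this
  have hadj_uy3 : R.Adj u y3 := by
    have := P3.adj_getVert_succ (show 0 < P3.length by omega)
    rwa [P3.getVert_zero] at this
  refine ⟨⟨s(u,x), hadj_ux⟩,
    {⟨s(u,x), hadj_ux⟩, ⟨s(u,y2), hadj_uy2⟩, ⟨s(u,y3), hadj_uy3⟩},
    ⟨Finset.mem_insert_self _ _,
      auxStarTriangle hadj_ux hadj_uy2 hadj_uy3 hxy2 hxy3 hy23⟩, ?_⟩
  rintro t ⟨het, hcard, htri⟩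
  have classify : ∀ g : R.edgeSet, g ∈ t → g ≠ ⟨s(u,x), hadj_ux⟩ →
      g = ⟨s(x,x'), hadj_xx'⟩ ∨ g = ⟨s(u,y2), hadj_uy2⟩ ∨ g = ⟨s(u,y3), hadj_uy3⟩ := by
    intro g hg hne
    have hadjeg := htri _ het _ hg (Ne.symm hne)
    obtain ⟨hne', m, hm_e, hm_g⟩ := lineGraph_adj_iff_exists.mp hadjeg
    rcases Sym2.mem_iff.mp hm_e with hmu | hmx
    · obtain ⟨z, hz⟩ := Sym2.mem_iff_exists.mp hm_g
      rw [hmu] at hz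
      have hRz : R.Adj u z := by
        have := g.2
        rw [hz] at this
        exact this
      rcases hNu z hRz with hzz | hzz | hzz <;> subst hzz
      · exact absurd (Subtype.ext hz) hne
      · exact Or.inr (Or.inl (Subtype.ext hz))
      · exact Or.inr (Or.inr (Subtype.ext hz))
    · obtain ⟨z, hz⟩ := Sym2.mem_iff_exists.mp hm_g
      rw [hmx] at hz
      have hRz : R.Adj x z := by
        have := g.2
        rw [hz] at this
        exact this
      rcases hNx z hRz with hzz | hzz <;> subst hzz
      · exact absurd (Subtype.ext (hz.trans (Sym2.eq_swap))) hne
      · exact Or.inl (Subtype.ext hz)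
  have noF : ∀ (w : W) (hw : R.Adj u w), w ≠ x → w ≠ x' →
      ¬ R.lineGraph.Adj ⟨s(x,x'), hadj_xx'⟩ ⟨s(u,w), hw⟩ := by
    intro w hw hw1 hw2 hadjc
    obtain ⟨-, m, hm1, hm2⟩ := lineGraph_adj_iff_exists.mp hadjc
    rcases Sym2.mem_iff.mp hm1 with rfl | rfl <;>
      rcases Sym2.mem_iff.mp hm2 with hh | hh
    · exact hux hh.symm
    · exact hw1 hh.symm
    · exact hux' hh.symm
    · exact hw2 hh.symm
  have hcard2 : (t.erase ⟨s(u,x), hadj_ux⟩).card = 2 := by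
    rw [Finset.card_erase_of_mem het, hcard]
  obtain ⟨g, gg, hggne, herase⟩ := Finset.card_eq_two.mp hcard2
  have hg_er : g ∈ t.erase ⟨s(u,x), hadj_ux⟩ := by
    rw [herase]; exact Finset.mem_insert_self _ _
  have hgg_er : gg ∈ t.erase ⟨s(u,x), hadj_ux⟩ := by
    rw [herase]; simp
  have hg_t : g ∈ t := Finset.mem_of_mem_erase hg_er
  have hgg_t : gg ∈ t := Finset.mem_of_mem_erase hgg_er
  have hg_ne : g ≠ ⟨s(u,x), hadj_ux⟩ := Finset.ne_of_mem_erase hg_er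
  have hgg_ne : gg ≠ ⟨s(u,x), hadj_ux⟩ := Finset.ne_of_mem_erase hgg_er
  have hteq : t = {⟨s(u,x), hadj_ux⟩, g, gg} := by
    rw [← Finset.insert_erase het, herase]
  have hy2x : y2 ≠ x := Ne.symm hxy2
  have hy2x' : y2 ≠ x' := Ne.symm hx'y2
  have hy3x : y3 ≠ x := Ne.symm hxy3
  have hy3x' : y3 ≠ x' := Ne.symm hx'y3
  rcases classify g hg_t hg_ne with hgF | hg2 | hg3 <;>
    rcases classify gg hgg_t hgg_ne with hF | h2 | h3
  · exact absurd (hgF.trans hF.symm) hggne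
  · exact absurd (hgF ▸ h2 ▸ htri _ hg_t _ hgg_t hggne)
      (noF y2 hadj_uy2 hy2x hy2x')
  · exact absurd (hgF ▸ h3 ▸ htri _ hg_t _ hgg_t hggne)
      (noF y3 hadj_uy3 hy3x hy3x')
  · exact absurd (hF ▸ hg2 ▸ htri _ hgg_t _ hg_t (Ne.symm hggne))
      (noF y2 hadj_uy2 hy2x hy2x')
  · exact absurd (hg2.trans h2.symm) hggne
  · rw [hteq, hg2, h3]
  · exact absurd (hF ▸ hg3 ▸ htri _ hgg_t _ hg_t (Ne.symm hggne))
      (noF y3 hadj_uy3 hy3x hy3x')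
  · rw [hteq, hg3, h2, Finset.pair_comm]
  · exact absurd (hg3.trans h3.symm) hggne






variable {W : Type*} {R : SimpleGraph W}




lemma auxMeetSymm {e : W} {a b c d : W} {P : R.Walk a b} {Q : R.Walk c d}
    (m : MeetOnly R e P Q) : MeetOnly R e Q P := fun x h1 h2 => m x h2 h1

lemma auxMeetRev₁ {e : W} {a b c d : W} {P : R.Walk a b} {Q : R.Walk c d}
    (m : MeetOnly R e P Q) : MeetOnly R e P.reverse Q := fun x h1 h2 =>
  m x (by rwa [Walk.support_reverse, List.mem_reverse] at h1) h2

lemma auxMeetRev₂ {e : W} {a b c d : W} {P : R.Walk a b} {Q : R.Walk c d}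
    (m : MeetOnly R e P Q) : MeetOnly R e P Q.reverse := fun x h1 h2 =>
  m x h1 (by rwa [Walk.support_reverse, List.mem_reverse] at h2)

lemma auxDisjSymm {a b c d : W} {P : R.Walk a b} {Q : R.Walk c d}
    (dd : DisjW R P Q) : DisjW R Q P := fun x h1 h2 => dd x h2 h1


end AuxLemmas

/-- Let `R` be a subdivision of `K₄` and `F` its line-graph. Then
`R` is a proper subdivision (i.e. `R ≠ K₄`) if and only if `F` has a vertex lying in
exactly one triangle of `F`. -/
theorem proper_iff_vertex_in_unique_triangle
    {W : Type*} [Fintype W] [DecidableEq W] (R : SimpleGraph W) (h : IsSubdivK4 R) :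
    ¬ Nonempty (R ≃g (⊤ : SimpleGraph (Fin 4))) ↔
    ∃ e : R.edgeSet, ∃! t : Finset R.edgeSet, e ∈ t ∧ IsTriangleSet R.lineGraph t := by
  obtain ⟨a, b, c, d, Pab, Pac, Pad, Pbc, Pbd, Pcd, hab, hac, had, hbc, hbd, hcd,
    pab, pac, pad, pbc, pbd, pcd,
    Mab_ac, Mab_ad, Mac_ad, Mab_bc, Mab_bd, Mbc_bd, Mac_bc, Mac_cd, Mbc_cd,
    Mad_bd, Mad_cd, Mbd_cd, Dab_cd, Dac_bd, Dad_bc, hvert, hcover⟩ := h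
  constructor
  · intro hniso
    by_cases h1 : 2 ≤ Pab.length
    · exact auxKey R a b c d Pab Pac Pad Pbc Pbd Pcd hab hac had pab pac pad
        Mab_ac Mab_ad Mac_ad Mab_bc Mab_bd Dab_cd hcover h1
    by_cases h2 : 2 ≤ Pac.length
    · refine auxKey R a c b d Pac Pab Pad Pbc.reverse Pcd Pbd hac hab had pac pab pad
        (auxMeetSymm Mab_ac) Mac_ad Mab_ad (auxMeetRev₂ Mac_bc) Mac_cd Dac_bd ?_ h2
      intro x y hxy
      simp only [Walk.toSubgraph_reverse]
      rcases hcover x y hxy with hh|hh|hh|hh|hh|hh <;> tauto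
    by_cases h3 : 2 ≤ Pad.length
    · refine auxKey R a d b c Pad Pab Pac Pbd.reverse Pcd.reverse Pbc had hab hac
        pad pab pac (auxMeetSymm Mab_ad) (auxMeetSymm Mac_ad) Mab_ac
        (auxMeetRev₂ Mad_bd) (auxMeetRev₂ Mad_cd) Dad_bc ?_ h3
      intro x y hxy
      simp only [Walk.toSubgraph_reverse]
      rcases hcover x y hxy with hh|hh|hh|hh|hh|hh <;> tauto
    by_cases h4 : 2 ≤ Pbc.length
    · refine auxKey R b c a d Pbc Pab.reverse Pbd Pac.reverse Pcd Pad hbc (Ne.symm hab)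
        hbd pbc pab.reverse pbd (auxMeetRev₂ (auxMeetSymm Mab_bc)) Mbc_bd
        (auxMeetRev₁ Mab_bd) (auxMeetRev₂ (auxMeetSymm Mac_bc)) Mbc_cd
        (auxDisjSymm Dad_bc) ?_ h4
      intro x y hxy
      simp only [Walk.toSubgraph_reverse]
      rcases hcover x y hxy with hh|hh|hh|hh|hh|hh <;> tauto
    by_cases h5 : 2 ≤ Pbd.length
    · refine auxKey R b d a c Pbd Pab.reverse Pbc Pad.reverse Pcd.reverse Pac hbd
        (Ne.symm hab) hbc pbd pab.reverse pbc (auxMeetRev₂ (auxMeetSymm Mab_bd))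
        (auxMeetSymm Mbc_bd) (auxMeetRev₁ Mab_bc) (auxMeetRev₂ (auxMeetSymm Mad_bd))
        (auxMeetRev₂ Mbd_cd) (auxDisjSymm Dac_bd) ?_ h5
      intro x y hxy
      simp only [Walk.toSubgraph_reverse]
      rcases hcover x y hxy with hh|hh|hh|hh|hh|hh <;> tauto
    by_cases h6 : 2 ≤ Pcd.length
    · refine auxKey R c d a b Pcd Pac.reverse Pbc.reverse Pad.reverse Pbd.reverse Pab
        hcd (Ne.symm hac) (Ne.symm hbc) pcd pac.reverse pbc.reverse
        (auxMeetRev₂ (auxMeetSymm Mac_cd)) (auxMeetRev₂ (auxMeetSymm Mbc_cd))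
        (auxMeetRev₁ (auxMeetRev₂ Mac_bc)) (auxMeetRev₂ (auxMeetSymm Mad_cd))
        (auxMeetRev₂ (auxMeetSymm Mbd_cd)) (auxDisjSymm Dab_cd) ?_ h6
      intro x y hxy
      simp only [Walk.toSubgraph_reverse]
      rcases hcover x y hxy with hh|hh|hh|hh|hh|hh <;> tauto
    -- all lengths are 1: build the isomorphism
    · exfalso
      apply hniso
      have L : ∀ {s t : W} (p : R.Walk s t), s ≠ t → ¬ 2 ≤ p.length → p.length = 1 := by
        intro s t p hst hl
        have h0 : p.length ≠ 0 := fun h0 => hst (by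
          have := p.getVert_length
          rwa [h0, p.getVert_zero] at this)
        omega
      have lab := L Pab hab h1
      have lac := L Pac hac h2
      have lad := L Pad had h3
      have lbc := L Pbc hbc h4
      have lbd := L Pbd hbd h5
      have lcd := L Pcd hcd h6
      have adj1 : ∀ {s t : W} (p : R.Walk s t), p.length = 1 → R.Adj s t := by
        intro s t p hl
        have := p.adj_getVert_succ (show 0 < p.length by omega)
        rwa [p.getVert_zero, show (0:ℕ)+1 = p.length by omega, p.getVert_length] at this
      have eab := adj1 Pab lab
      have eac := adj1 Pac lac
      have ead := adj1 Pad lad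
      have ebc := adj1 Pbc lbc
      have ebd := adj1 Pbd lbd
      have ecd := adj1 Pcd lcd
      have sup1 : ∀ {s t : W} (p : R.Walk s t), p.length = 1 →
          ∀ x ∈ p.support, x = s ∨ x = t := by
        intro s t p hl x hx
        obtain ⟨i, hgi, hile⟩ := Walk.mem_support_iff_exists_getVert.mp hx
        have : i = 0 ∨ i = 1 := by omega
        rcases this with rfl | rfl
        · exact Or.inl (by rw [p.getVert_zero] at hgi; exact hgi.symm)
        · exact Or.inr (by
            rw [show (1:ℕ) = p.length by omega, p.getVert_length] at hgi
            exact hgi.symm)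
      have hmem : ∀ x : W, x = a ∨ x = b ∨ x = c ∨ x = d := by
        intro x
        rcases hvert x with hh|hh|hh|hh|hh|hh
        · rcases sup1 Pab lab x hh with rfl|rfl <;> tauto
        · rcases sup1 Pac lac x hh with rfl|rfl <;> tauto
        · rcases sup1 Pad lad x hh with rfl|rfl <;> tauto
        · rcases sup1 Pbc lbc x hh with rfl|rfl <;> tauto
        · rcases sup1 Pbd lbd x hh with rfl|rfl <;> tauto
        · rcases sup1 Pcd lcd x hh with rfl|rfl <;> tauto
      let f : W → Fin 4 := fun x => if x = a then 0 else if x = b then 1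
        else if x = c then 2 else 3
      let g : Fin 4 → W := ![a, b, c, d]
      have hgf : ∀ x, g (f x) = x := by
        intro x
        rcases hmem x with rfl|rfl|rfl|rfl
        · simp [f, g]
        · simp [f, g, Ne.symm hab]
        · simp [f, g, Ne.symm hac, Ne.symm hbc]
        · simp [f, g, Ne.symm had, Ne.symm hbd, Ne.symm hcd]
      have hfg : ∀ i, f (g i) = i := by
        intro i
        fin_cases i <;>
          simp [f, g, Ne.symm hab, Ne.symm hac, Ne.symm hbc, Ne.symm had,
            Ne.symm hbd, Ne.symm hcd]
      refine ⟨⟨⟨f, g, hgf, hfg⟩, @fun x y => ?_⟩⟩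
      rw [top_adj]
      constructor
      · intro hne
        have hxy : x ≠ y := fun hh => hne (by rw [hh])
        have eba := eab.symm; have eca := eac.symm; have eda := ead.symm
        have ecb := ebc.symm; have edb := ebd.symm; have edc := ecd.symm
        rcases hmem x with rfl|rfl|rfl|rfl <;> rcases hmem y with rfl|rfl|rfl|rfl <;>
          first | exact absurd rfl hxy | assumption
      · intro hr hh
        exact hr.ne (by rw [← hgf x, ← hgf y]; exact congrArg g hh)
  · rintro ⟨e, t0, ⟨het0, htri0⟩, huniq⟩ ⟨φ⟩
    have hcardW : Fintype.card W = 4 := by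
      rw [← Fintype.card_fin 4]; exact Fintype.card_congr φ.toEquiv
    have hadj : ∀ x y : W, R.Adj x y ↔ x ≠ y := by
      intro x y
      constructor
      · intro hh he
        exact (top_adj _ _).mp (φ.map_rel_iff.mpr hh) (by rw [he])
      · intro hne
        apply φ.map_rel_iff.mp
        rw [top_adj]
        exact fun hfe => hne (φ.toEquiv.injective hfe)
    obtain ⟨u, v, hrep⟩ : ∃ u v, (e : Sym2 W) = s(u, v) := by
      induction (e : Sym2 W) using Sym2.ind with
      | _ p q => exact ⟨p, q, rfl⟩
    have hAdj_uv : R.Adj u v := by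
      have := e.2; rw [hrep] at this; exact this
    have huv : u ≠ v := (hadj u v).mp hAdj_uv
    have hcard2 : (Finset.univ \ {u, v} : Finset W).card = 2 := by
      rw [Finset.card_sdiff_of_subset (Finset.subset_univ _), Finset.card_univ, hcardW,
        Finset.card_pair huv]
    obtain ⟨w1, w2, hw12, hset⟩ := Finset.card_eq_two.mp hcard2
    have hw1 : w1 ∈ Finset.univ \ ({u, v} : Finset W) := by
      rw [hset]; exact Finset.mem_insert_self _ _
    have hw2 : w2 ∈ Finset.univ \ ({u, v} : Finset W) := by
      rw [hset]; simp
    rw [Finset.mem_sdiff, Finset.mem_insert, Finset.mem_singleton] at hw1 hw2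
    push_neg at hw1 hw2
    obtain ⟨-, hw1u, hw1v⟩ := hw1
    obtain ⟨-, hw2u, hw2v⟩ := hw2
    have euw1 : R.Adj u w1 := (hadj _ _).mpr (Ne.symm hw1u)
    have euw2 : R.Adj u w2 := (hadj _ _).mpr (Ne.symm hw2u)
    have evw1 : R.Adj v w1 := (hadj _ _).mpr (Ne.symm hw1v)
    have evw2 : R.Adj v w2 := (hadj _ _).mpr (Ne.symm hw2v)
    have hvu : R.Adj v u := hAdj_uv.symm
    have he1 : e = (⟨s(u,v), hAdj_uv⟩ : R.edgeSet) := Subtype.ext hrep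
    have he2 : e = (⟨s(v,u), hvu⟩ : R.edgeSet) :=
      Subtype.ext (hrep.trans (Sym2.eq_swap))
    have ht1 : IsTriangleSet R.lineGraph
        {⟨s(u,v), hAdj_uv⟩, ⟨s(u,w1), euw1⟩, ⟨s(u,w2), euw2⟩} :=
      auxStarTriangle hAdj_uv euw1 euw2 (Ne.symm hw1v) (Ne.symm hw2v) hw12
    have ht2 : IsTriangleSet R.lineGraph
        {⟨s(v,u), hvu⟩, ⟨s(v,w1), evw1⟩, ⟨s(v,w2), evw2⟩} :=
      auxStarTriangle hvu evw1 evw2 (Ne.symm hw1u) (Ne.symm hw2u) hw12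
    have h1eq := huniq {⟨s(u,v), hAdj_uv⟩, ⟨s(u,w1), euw1⟩, ⟨s(u,w2), euw2⟩}
      ⟨by rw [he1]; exact Finset.mem_insert_self _ _, ht1⟩
    have h2eq := huniq {⟨s(v,u), hvu⟩, ⟨s(v,w1), evw1⟩, ⟨s(v,w2), evw2⟩}
      ⟨by rw [he2]; exact Finset.mem_insert_self _ _, ht2⟩
    have h12 : ({⟨s(u,v), hAdj_uv⟩, ⟨s(u,w1), euw1⟩, ⟨s(u,w2), euw2⟩} : Finset R.edgeSet)
        = {⟨s(v,u), hvu⟩, ⟨s(v,w1), evw1⟩, ⟨s(v,w2), evw2⟩} :=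
      h1eq.trans h2eq.symm
    have hmem1 : (⟨s(u,w1), euw1⟩ : R.edgeSet)
        ∈ ({⟨s(v,u), hvu⟩, ⟨s(v,w1), evw1⟩, ⟨s(v,w2), evw2⟩} : Finset R.edgeSet) := by
      rw [← h12]; simp
    simp only [Finset.mem_insert, Finset.mem_singleton, Subtype.mk.injEq,
      Subtype.ext_iff, Sym2.eq_iff] at hmem1
    rcases hmem1 with (⟨h9,-⟩|⟨-,h9⟩) | (⟨h9,-⟩|⟨h9,-⟩) | (⟨h9,-⟩|⟨h9,-⟩)
    · exact huv h9
    · exact hw1v h9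
    · exact huv h9
    · exact hw1u h9.symm
    · exact huv h9
    · exact hw2u h9.symm
end
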